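/- arXiv:1309.5094 — 11 statements merged into one kernel-verified Lean document; each statement's English description precedes it below -/
import Mathlib

section
/- Let n = 1 and suppose l satisfies Assumption 2, with I: (−∞,0) → ℝ the inverse function of l′. Let Z = dQ/dP, let α > lim_{x→+∞} l(x), and suppose λ* < 0 is a real number such that E^P[ l(I(λ* Z)) ] = α with I(λ* Z) Q-integrable. Then the infimum of E^Q[M] over all random variables M such that M is Q-integrable and E^P[ l(M − S_1) ] ≤ α equals E^Q[S_1] + E^Q[ I(λ* Z) ]. -/
open MeasureTheory Filter
open scoped MeasureTheory NNReal ENNReal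

/-- Tangent line inequality for a convex differentiable function on ℝ. -/
lemma tangent_le {f f' : ℝ → ℝ} (hf : ConvexOn ℝ Set.univ f)
    (hd : ∀ x, HasDerivAt f (f' x) x) (x y : ℝ) :
    f x + f' x * (y - x) ≤ f y := by
  rcases lt_trichotomy x y with h | h | h
  · have hs := hf.le_slope_of_hasDerivAt (Set.mem_univ x) (Set.mem_univ y) h (hd x)
    rw [slope_def_field] at hs
    have hyx : 0 < y - x := by linarith
    rw [le_div_iff₀ hyx] at hs
    linarith
  · simp [h]
  · have hs := hf.slope_le_of_hasDerivAt (Set.mem_univ y) (Set.mem_univ x) h (hd x)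
    rw [slope_def_field] at hs
    have hxy : 0 < x - y := by linarith
    rw [div_le_iff₀ hxy] at hs
    linarith

/-- Proposition 2.4(1): with `n = 1` and a loss function satisfying Assumption 2
(strictly convex, strictly decreasing, bounded below, C¹, Inada conditions), if
`λ* < 0` solves `E^P[l(I(λ* Z))] = α` where `Z = dQ/dP`, then the minimal cost
`inf { E^Q[M] : E^P[l(M - S₁)] ≤ α }` equals `E^Q[S₁] + E^Q[I(λ* Z)]`. -/
theorem stmt_2
    {Ω : Type*} {m0 : MeasurableSpace Ω} (P Q : Measure Ω)
    [IsProbabilityMeasure P] [IsProbabilityMeasure Q]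
    (hPQ : P ≪ Q) (hQP : Q ≪ P)
    (Z : Ω → ℝ) (hZmeas : Measurable Z) (hZpos : ∀ᵐ ω ∂P, 0 < Z ω)
    (hZ : P.withDensity (fun ω => ENNReal.ofReal (Z ω)) = Q)
    (S₁ : Ω → ℝ) (hS₁ : Integrable S₁ Q)
    (l l' : ℝ → ℝ)
    (hconv : StrictConvexOn ℝ Set.univ l) (hdec : StrictAnti l)
    (hbdd : ∃ c : ℝ, ∀ x : ℝ, c ≤ l x)
    (hderiv : ∀ x, HasDerivAt l (l' x) x) (hcont : Continuous l')
    (hInada₁ : Tendsto l' atBot atBot) (hInada₂ : Tendsto l' atTop (nhds 0))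
    (I : ℝ → ℝ) (hI₁ : ∀ y : ℝ, y < 0 → l' (I y) = y) (hI₂ : ∀ x : ℝ, I (l' x) = x)
    (L α : ℝ) (hlim : Tendsto l atTop (nhds L)) (hα : L < α)
    (lamstar : ℝ) (hlam : lamstar < 0)
    (hlint : Integrable (fun ω => l (I (lamstar * Z ω))) P)
    (hIint : Integrable (fun ω => I (lamstar * Z ω)) Q)
    (hsol : ∫ ω, l (I (lamstar * Z ω)) ∂P = α) :
    sInf {x : ℝ | ∃ M : Ω → ℝ, Integrable M Q ∧
        Integrable (fun ω => l (M ω - S₁ ω)) P ∧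
        (∫ ω, l (M ω - S₁ ω) ∂P) ≤ α ∧
        x = ∫ ω, M ω ∂Q}
      = (∫ ω, S₁ ω ∂Q) + ∫ ω, I (lamstar * Z ω) ∂Q := by
  set c : ℝ := (∫ ω, S₁ ω ∂Q) + ∫ ω, I (lamstar * Z ω) ∂Q with hc
  -- density rewritten with ℝ≥0 values
  have hZ' : P.withDensity (fun ω => ((Z ω).toNNReal : ℝ≥0∞)) = Q := by
    simpa [ENNReal.ofReal] using hZ
  have hNNmeas : Measurable fun ω => (Z ω).toNNReal := hZmeas.real_toNNReal
  -- transfer lemma from Q to P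
  have key : ∀ g : Ω → ℝ, Integrable g Q →
      Integrable (fun ω => Z ω * g ω) P ∧ ∫ ω, g ω ∂Q = ∫ ω, Z ω * g ω ∂P := by
    intro g hg
    have hsmul_ae : (fun ω => (Z ω).toNNReal • g ω) =ᵐ[P] fun ω => Z ω * g ω := by
      filter_upwards [hZpos] with ω hω
      simp [NNReal.smul_def, Real.coe_toNNReal _ hω.le]
    have hint : Integrable (fun ω => (Z ω).toNNReal • g ω) P := by
      rw [← integrable_withDensity_iff_integrable_smul hNNmeas, hZ']
      exact hg
    constructor
    · exact hint.congr hsmul_ae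
    · rw [← hZ', integral_withDensity_eq_integral_smul hNNmeas]
      exact integral_congr_ae hsmul_ae
  -- the candidate minimizer
  set Mstar : Ω → ℝ := fun ω => S₁ ω + I (lamstar * Z ω) with hMstar
  have hMstarInt : Integrable Mstar Q := hS₁.add hIint
  have hMstar_mem : c ∈ {x : ℝ | ∃ M : Ω → ℝ, Integrable M Q ∧
      Integrable (fun ω => l (M ω - S₁ ω)) P ∧
      (∫ ω, l (M ω - S₁ ω) ∂P) ≤ α ∧ x = ∫ ω, M ω ∂Q} := by
    refine ⟨Mstar, hMstarInt, ?_, ?_, ?_⟩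
    · simpa [hMstar] using hlint
    · simp only [hMstar, add_sub_cancel_left]
      exact le_of_eq hsol
    · rw [hc, hMstar, integral_add hS₁ hIint]
  -- lower bound
  have hlb : ∀ x ∈ {x : ℝ | ∃ M : Ω → ℝ, Integrable M Q ∧
      Integrable (fun ω => l (M ω - S₁ ω)) P ∧
      (∫ ω, l (M ω - S₁ ω) ∂P) ≤ α ∧ x = ∫ ω, M ω ∂Q}, c ≤ x := by
    rintro x ⟨M, hMint, hlM, hle, rfl⟩
    -- the difference, integrable w.r.t. Q
    set g : Ω → ℝ := fun ω => M ω - S₁ ω - I (lamstar * Z ω) with hg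
    have hgQ : Integrable g Q := (hMint.sub hS₁).sub hIint
    obtain ⟨hZgP, hZgint⟩ := key g hgQ
    -- pointwise tangent-line bound, a.e. P
    have hpt : ∀ᵐ ω ∂P,
        l (I (lamstar * Z ω)) + lamstar * (Z ω * g ω) ≤ l (M ω - S₁ ω) := by
      filter_upwards [hZpos] with ω hω
      have hneg : lamstar * Z ω < 0 := mul_neg_of_neg_of_pos hlam hω
      have := tangent_le hconv.convexOn hderiv (I (lamstar * Z ω)) (M ω - S₁ ω)
      rw [hI₁ _ hneg] at this
      have hrw : lamstar * (Z ω * g ω)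
          = lamstar * Z ω * (M ω - S₁ ω - I (lamstar * Z ω)) := by ring
      linarith [this, hrw ▸ le_refl (lamstar * (Z ω * g ω))]
    have hRHSint : Integrable
        (fun ω => l (I (lamstar * Z ω)) + lamstar * (Z ω * g ω)) P :=
      hlint.add (hZgP.const_mul lamstar)
    have hmono := integral_mono_ae hRHSint hlM hpt
    rw [integral_add hlint (hZgP.const_mul lamstar), hsol,
      integral_const_mul] at hmono
    have h1 : α + lamstar * ∫ ω, g ω ∂Q ≤ α := by
      rw [hZgint]; linarith [le_trans hmono hle]
    have h2 : ∫ ω, g ω ∂Q = (∫ ω, M ω ∂Q) - c := by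
      have e := integral_sub (f := fun ω => M ω - S₁ ω)
        (g := fun ω => I (lamstar * Z ω)) (hMint.sub hS₁) hIint
      have e2 := integral_sub (f := M) (g := S₁) hMint hS₁
      rw [hc]
      simp only [hg]
      rw [e, e2]
      ring
    rw [h2] at h1
    nlinarith [h1]
  exact IsLeast.csInf_eq ⟨hMstar_mem, hlb⟩
end

section
/- The quantity V_0^{EU} — the infimum of E^Q[M_0] over all Q-supermartingales (M_k)_{k=0}^n satisfying E^P[ l(M_k − S_k) ] ≤ α_k for k = 1,…,n — equals the infimum of E^Q[M_0] over all Q-supermartingales (M_t)_{t=0}^n for which there exists, for each k ∈ {1,…,n}, a P-supermartingale (N^k_t)_{t=0}^k satisfying N^k_0 = α_k a.s. and N^k_k ≥ l(M_k − S_k) a.s. -/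
/-!
For each candidate `M` the two constraints on `X = l(M_k - S_k)` are equivalent, so the two sets
whose infima are taken coincide. If `E^P[X] ≤ α_k`, the `P`-martingale
`N_t = E^P[X | ℱ_t] + α_k - E^P[X]` ends at `N_k ≥ X`, and `N_0` is a.s. the constant `α_k`
because `ℱ_0` is `P`-trivial. Conversely, expectations of a supermartingale decrease, so
`E^P[X] ≤ E^P[N_k] ≤ E^P[N_0] = α_k`.
-/
open MeasureTheory Filter
open scoped MeasureTheory

/-- A supermartingale (under measure `μ`) on the discrete time interval `{a,…,b}`. -/
def IsSupermartingaleOn {Ω : Type*} {m0 : MeasurableSpace Ω}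
    (𝓕 : MeasureTheory.Filtration ℕ m0) (μ : Measure Ω)
    (M : ℕ → Ω → ℝ) (a b : ℕ) : Prop :=
  (∀ k, a ≤ k → k ≤ b → StronglyMeasurable[𝓕 k] (M k)) ∧
  (∀ k, a ≤ k → k ≤ b → Integrable (M k) μ) ∧
  (∀ k, a ≤ k → k < b → (μ[M (k + 1)|𝓕 k]) ≤ᵐ[μ] M k)

theorem exists_ae_eq_const_of_measure_eq_zero_or_one {Ω β : Type*} [MeasurableSpace β]
    [Nonempty β] [MeasurableSpace.CountablySeparated β] {m m0 : MeasurableSpace Ω}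
    {μ : Measure[m0] Ω} [IsProbabilityMeasure μ] (hm : m ≤ m0)
    (htriv : ∀ s : Set Ω, MeasurableSet[m] s → μ s = 0 ∨ μ s = 1)
    {f : Ω → β} (hf : Measurable[m] f) : ∃ c, f =ᵐ[μ] Function.const Ω c :=
  exists_eventuallyEq_const_of_forall_separating MeasurableSet fun _ hU =>
    (htriv _ (hf hU)).symm.imp
      (fun h => mem_ae_iff.2 ((prob_compl_eq_zero_iff (hm _ (hf hU))).2 h))
      measure_eq_zero_iff_ae_notMem.1

section

variable {Ω : Type*} {m0 : MeasurableSpace Ω} {𝓕 : Filtration ℕ m0} {μ : Measure Ω}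

theorem MeasureTheory.Supermartingale.isSupermartingaleOn {M : ℕ → Ω → ℝ}
    (hM : Supermartingale M 𝓕 μ) (a b : ℕ) : IsSupermartingaleOn 𝓕 μ M a b :=
  ⟨fun k _ _ => hM.stronglyAdapted k, fun k _ _ => hM.integrable k,
    fun k _ _ => hM.condExp_ae_le k.le_succ⟩

theorem IsSupermartingaleOn.integral_le [IsFiniteMeasure μ] {N : ℕ → Ω → ℝ} {a b : ℕ}
    (hN : IsSupermartingaleOn 𝓕 μ N a b) {t : ℕ} (hat : a ≤ t) (htb : t ≤ b) :
    ∫ ω, N t ω ∂μ ≤ ∫ ω, N a ω ∂μ := by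
  induction t, hat using Nat.le_induction with
  | base => exact le_rfl
  | succ t hat ih =>
    have ht : t < b := htb
    calc ∫ ω, N (t + 1) ω ∂μ
        = ∫ ω, (μ[N (t + 1)|𝓕 t]) ω ∂μ := (integral_condExp (𝓕.le t)).symm
      _ ≤ ∫ ω, N t ω ∂μ :=
          integral_mono_ae integrable_condExp (hN.2.1 t hat ht.le) (hN.2.2 t hat ht)
      _ ≤ ∫ ω, N a ω ∂μ := ih ht.le

theorem integral_le_of_le_supermartingale [IsProbabilityMeasure μ] {X : Ω → ℝ}
    (hX : Integrable X μ) {N : ℕ → Ω → ℝ} {k : ℕ} {a : ℝ}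
    (hN : IsSupermartingaleOn 𝓕 μ N 0 k) (hN0 : N 0 =ᵐ[μ] fun _ => a) (hXN : X ≤ᵐ[μ] N k) :
    ∫ ω, X ω ∂μ ≤ a :=
  calc ∫ ω, X ω ∂μ ≤ ∫ ω, N k ω ∂μ := integral_mono_ae hX (hN.2.1 k k.zero_le le_rfl) hXN
    _ ≤ ∫ ω, N 0 ω ∂μ := hN.integral_le (Nat.zero_le k) le_rfl
    _ = a := by simp [integral_congr_ae hN0]

theorem exists_supermartingale_of_integral_le [IsProbabilityMeasure μ]
    (htriv : ∀ s : Set Ω, MeasurableSet[𝓕 0] s → μ s = 0 ∨ μ s = 1) {X : Ω → ℝ} {k : ℕ}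
    (hXm : StronglyMeasurable[𝓕 k] X) (hX : Integrable X μ) {a : ℝ} (hXa : ∫ ω, X ω ∂μ ≤ a) :
    ∃ N : ℕ → Ω → ℝ, IsSupermartingaleOn 𝓕 μ N 0 k ∧ (N 0 =ᵐ[μ] fun _ => a) ∧ X ≤ᵐ[μ] N k := by
  set c := a - ∫ ω, X ω ∂μ
  refine ⟨fun t => μ[X|𝓕 t] + fun _ => c,
    ((martingale_condExp X 𝓕 μ).add (martingale_const 𝓕 μ c)).supermartingale
      |>.isSupermartingaleOn 0 k, ?_, ?_⟩
  · obtain ⟨b, hb⟩ := exists_ae_eq_const_of_measure_eq_zero_or_one (𝓕.le 0) htriv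
      (stronglyMeasurable_condExp (f := X) (μ := μ)).measurable
    have hbX : b = ∫ ω, X ω ∂μ := by
      simpa [integral_congr_ae hb] using integral_condExp (f := X) (μ := μ) (𝓕.le 0)
    filter_upwards [hb] with ω hω
    simp [hω, hbX, c]
  · change X ≤ᵐ[μ] μ[X|𝓕 k] + fun _ => c
    rw [condExp_of_stronglyMeasurable (𝓕.le k) hXm hX]
    exact Eventually.of_forall fun ω => le_add_of_nonneg_right (sub_nonneg.2 hXa)

theorem integral_le_iff_exists_supermartingale [IsProbabilityMeasure μ]
    (htriv : ∀ s : Set Ω, MeasurableSet[𝓕 0] s → μ s = 0 ∨ μ s = 1) {X : Ω → ℝ} {k : ℕ}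
    (hXm : StronglyMeasurable[𝓕 k] X) (hX : Integrable X μ) (a : ℝ) :
    ∫ ω, X ω ∂μ ≤ a ↔
      ∃ N : ℕ → Ω → ℝ, IsSupermartingaleOn 𝓕 μ N 0 k ∧ (N 0 =ᵐ[μ] fun _ => a) ∧ X ≤ᵐ[μ] N k :=
  ⟨exists_supermartingale_of_integral_le htriv hXm hX,
    fun ⟨_, hN, hN0, hXN⟩ => integral_le_of_le_supermartingale hX hN hN0 hXN⟩

end

theorem stmt_5_general
    {Ω : Type*} {m0 : MeasurableSpace Ω} (P Q : Measure Ω)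
    [IsProbabilityMeasure P]
    (𝓕 : Filtration ℕ m0) (n : ℕ)
    (htriv : ∀ s : Set Ω, MeasurableSet[𝓕 0] s → P s = 0 ∨ P s = 1)
    (l : ℝ → ℝ) (hdec : Antitone l)
    (S : ℕ → Ω → ℝ) (hS : Adapted 𝓕 S)
    (α : ℕ → ℝ) :
    sInf {x : ℝ | ∃ M : ℕ → Ω → ℝ, IsSupermartingaleOn 𝓕 Q M 0 n ∧
        (∀ k, 1 ≤ k → k ≤ n → Integrable (fun ω => l (M k ω - S k ω)) P) ∧
        (∀ k, 1 ≤ k → k ≤ n → ∫ ω, l (M k ω - S k ω) ∂P ≤ α k) ∧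
        x = ∫ ω, M 0 ω ∂Q}
    =
    sInf {x : ℝ | ∃ M : ℕ → Ω → ℝ, IsSupermartingaleOn 𝓕 Q M 0 n ∧
        (∀ k, 1 ≤ k → k ≤ n → Integrable (fun ω => l (M k ω - S k ω)) P) ∧
        (∀ k, 1 ≤ k → k ≤ n → ∃ N : ℕ → Ω → ℝ,
          IsSupermartingaleOn 𝓕 P N 0 k ∧
          (N 0 =ᵐ[P] fun _ => α k) ∧
          ((fun ω => l (M k ω - S k ω)) ≤ᵐ[P] N k)) ∧
        x = ∫ ω, M 0 ω ∂Q} := by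
  congr 1
  ext x
  refine exists_congr fun M => and_congr_right fun hM => and_congr_right fun hint =>
    and_congr_left fun _ => forall₃_congr fun k hk1 hkn => ?_
  have hMS : Measurable[𝓕 k] fun ω => M k ω - S k ω :=
    (hM.1 k k.zero_le hkn).measurable.sub (hS k)
  exact integral_le_iff_exists_supermartingale htriv (hdec.measurable.comp hMS).stronglyMeasurable
    (hint k hk1 hkn) (α k)

/-- Proposition 3.1: `V₀^EU`, the infimum of `E^Q[M₀]` over `Q`-supermartingales
satisfying `E^P[l(M_k - S_k)] ≤ α_k` for `k = 1,…,n`, coincides with the infimum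
of `E^Q[M₀]` over `Q`-supermartingales for which there exist, for every `k`,
`P`-supermartingales `(N^k_t)_{t=0}^k` with `N^k_0 = α_k` and
`N^k_k ≥ l(M_k - S_k)` a.s. -/
theorem stmt_5
    {Ω : Type*} {m0 : MeasurableSpace Ω} (P Q : Measure Ω)
    [IsProbabilityMeasure P] [IsProbabilityMeasure Q]
    (hPQ : P ≪ Q) (hQP : Q ≪ P)
    (𝓕 : Filtration ℕ m0) (n : ℕ)
    (htriv : ∀ s : Set Ω, MeasurableSet[𝓕 0] s → P s = 0 ∨ P s = 1)
    (l : ℝ → ℝ) (hconv : ConvexOn ℝ Set.univ l) (hdec : Antitone l)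
    (hbdd : ∃ c : ℝ, ∀ x : ℝ, c ≤ l x)
    (S : ℕ → Ω → ℝ) (hS : Adapted 𝓕 S) (hSint : ∀ k, Integrable (S k) Q)
    (α : ℕ → ℝ) :
    sInf {x : ℝ | ∃ M : ℕ → Ω → ℝ, IsSupermartingaleOn 𝓕 Q M 0 n ∧
        (∀ k, 1 ≤ k → k ≤ n → Integrable (fun ω => l (M k ω - S k ω)) P) ∧
        (∀ k, 1 ≤ k → k ≤ n → ∫ ω, l (M k ω - S k ω) ∂P ≤ α k) ∧
        x = ∫ ω, M 0 ω ∂Q}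
    =
    sInf {x : ℝ | ∃ M : ℕ → Ω → ℝ, IsSupermartingaleOn 𝓕 Q M 0 n ∧
        (∀ k, 1 ≤ k → k ≤ n → Integrable (fun ω => l (M k ω - S k ω)) P) ∧
        (∀ k, 1 ≤ k → k ≤ n → ∃ N : ℕ → Ω → ℝ,
          IsSupermartingaleOn 𝓕 P N 0 k ∧
          (N 0 =ᵐ[P] fun _ => α k) ∧
          ((fun ω => l (M k ω - S k ω)) ≤ᵐ[P] N k)) ∧
        x = ∫ ω, M 0 ω ∂Q} :=
  stmt_5_general P Q 𝓕 n htriv l hdec S hS α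
end

section
/- Fix k ∈ {0,…,n−1} and ℱ_k-measurable random variables N^{k+1},…,N^n. If (M_t)_{t=k}^n and (M′_t)_{t=k}^n both belong to ℳ_{EU,k}(N^{k+1},…,N^n), then there exists (M″_t)_{t=k}^n ∈ ℳ_{EU,k}(N^{k+1},…,N^n) such that M″_k = M_k ∧ M′_k a.s. -/
open MeasureTheory Filter
open scoped MeasureTheory

/-- Membership in `ℳ_{EU,k}(N^{k+1},…,N^n)`: a `Q`-supermartingale `(M_t)_{t=k}^n`
with `l(M_t - S_t)` `P`-integrable and `E^P[l(M_t - S_t) | F_k] ≤ N^t` a.s. for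
every `t ∈ {k+1,…,n}`. -/
def MemEU {Ω : Type*} {m0 : MeasurableSpace Ω}
    (𝓕 : MeasureTheory.Filtration ℕ m0) (P Q : Measure Ω)
    (S : ℕ → Ω → ℝ) (l : ℝ → ℝ) (α : ℕ → Ω → ℝ) (k n : ℕ)
    (M : ℕ → Ω → ℝ) : Prop :=
  IsSupermartingaleOn 𝓕 Q M k n ∧
  ∀ t, k + 1 ≤ t → t ≤ n →
    Integrable (fun ω => l (M t ω - S t ω)) P ∧
    (P[fun ω => l (M t ω - S t ω)|𝓕 k]) ≤ᵐ[P] α t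

open scoped Classical

private lemma piecewise_eq_indicator_add {Ω : Type*} (A : Set Ω) (f g : Ω → ℝ) :
    A.piecewise f g = A.indicator f + Aᶜ.indicator g := by
  classical
  funext ω; by_cases h : ω ∈ A <;> simp [Set.piecewise, Set.indicator, h]

private lemma condexp_piecewise_aux {Ω : Type*} {m m0 : MeasurableSpace Ω} (hm : m ≤ m0)
    {μ : Measure Ω} {A : Set Ω} (hA : MeasurableSet[m] A) {f g : Ω → ℝ}
    (hf : Integrable f μ) (hg : Integrable g μ) :
    μ[A.piecewise f g|m] =ᵐ[μ] A.piecewise (μ[f|m]) (μ[g|m]) := by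
  classical
  rw [piecewise_eq_indicator_add]
  have h1 := condExp_add (μ := μ) (m := m) (hf.indicator (hm A hA))
    (hg.indicator (hm Aᶜ hA.compl))
  have h2 := condExp_indicator (μ := μ) (m := m) hf hA
  have h3 := condExp_indicator (μ := μ) (m := m) hg hA.compl
  refine h1.trans ?_
  filter_upwards [h2, h3] with ω h2 h3
  by_cases h : ω ∈ A <;> simp [Set.piecewise, Set.indicator, h, h2, h3]

/-- Lemma 3.2: the family `ℳ_{EU,k}` is downward directed. -/
theorem stmt_6
    {Ω : Type*} {m0 : MeasurableSpace Ω} (P Q : Measure Ω)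
    [IsProbabilityMeasure P] [IsProbabilityMeasure Q]
    (hPQ : P ≪ Q) (hQP : Q ≪ P)
    (𝓕 : Filtration ℕ m0) (n k : ℕ) (hk : k ≤ n - 1) (hn : 1 ≤ n)
    (l : ℝ → ℝ) (hconv : ConvexOn ℝ Set.univ l) (hdec : Antitone l)
    (hbdd : ∃ c : ℝ, ∀ x : ℝ, c ≤ l x)
    (S : ℕ → Ω → ℝ) (hS : Adapted 𝓕 S) (hSint : ∀ t, Integrable (S t) Q)
    (N : ℕ → Ω → ℝ) (hN : ∀ t, k + 1 ≤ t → t ≤ n → StronglyMeasurable[𝓕 k] (N t))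
    (M M' : ℕ → Ω → ℝ)
    (hM : MemEU 𝓕 P Q S l N k n M) (hM' : MemEU 𝓕 P Q S l N k n M') :
    ∃ M'' : ℕ → Ω → ℝ, MemEU 𝓕 P Q S l N k n M'' ∧
      M'' k =ᵐ[P] fun ω => min (M k ω) (M' k ω) := by
  classical
  have hkn : k ≤ n := le_trans hk (Nat.sub_le n 1)
  set A : Set Ω := {ω | M k ω ≤ M' k ω} with hAdef
  have hAk : MeasurableSet[𝓕 k] A :=
    measurableSet_le (hM.1.1 k le_rfl hkn).measurable (hM'.1.1 k le_rfl hkn).measurable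
  refine ⟨fun t => A.piecewise (M t) (M' t), ⟨⟨?_, ?_, ?_⟩, ?_⟩, ?_⟩
  all_goals beta_reduce
  · intro t ht1 ht2
    exact (hM.1.1 t ht1 ht2).piecewise (𝓕.mono ht1 A hAk) (hM'.1.1 t ht1 ht2)
  · intro t ht1 ht2
    rw [piecewise_eq_indicator_add]
    exact ((hM.1.2.1 t ht1 ht2).indicator (𝓕.le k A hAk)).add
      ((hM'.1.2.1 t ht1 ht2).indicator (𝓕.le k A hAk).compl)
  · intro t ht1 ht2
    have hce := condexp_piecewise_aux (𝓕.le t) (𝓕.mono ht1 A hAk)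
      (hM.1.2.1 (t + 1) (le_trans ht1 (Nat.le_succ t)) ht2)
      (hM'.1.2.1 (t + 1) (le_trans ht1 (Nat.le_succ t)) ht2)
    filter_upwards [hce, hM.1.2.2 t ht1 ht2, hM'.1.2.2 t ht1 ht2] with ω h1 h2 h3
    rw [h1]
    by_cases h : ω ∈ A <;> simp only [Set.piecewise, h, if_pos, if_neg, if_true, if_false]
    · exact h2
    · exact h3
  · intro t ht1 ht2
    have htk : k ≤ t := le_trans (Nat.le_succ k) ht1
    have heq : (fun ω => l (A.piecewise (M t) (M' t) ω - S t ω))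
        = A.piecewise (fun ω => l (M t ω - S t ω)) (fun ω => l (M' t ω - S t ω)) := by
      funext ω; by_cases h : ω ∈ A <;> simp [Set.piecewise, h]
    rw [heq]
    constructor
    · rw [piecewise_eq_indicator_add]
      exact ((hM.2 t ht1 ht2).1.indicator (𝓕.le k A hAk)).add
        ((hM'.2 t ht1 ht2).1.indicator (𝓕.le k A hAk).compl)
    · have hce := condexp_piecewise_aux (𝓕.le k) hAk
        (hM.2 t ht1 ht2).1 (hM'.2 t ht1 ht2).1
      filter_upwards [hce, (hM.2 t ht1 ht2).2, (hM'.2 t ht1 ht2).2] with ω h1 h2 h3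
      rw [h1]
      by_cases h : ω ∈ A <;> simp only [Set.piecewise, h, if_true, if_false]
      · exact h2
      · exact h3
  · refine Filter.EventuallyEq.of_eq (funext fun ω => ?_)
    by_cases h : ω ∈ A
    · simp [Set.piecewise, h, min_eq_left (show M k ω ≤ M' k ω from h)]
    · have : M' k ω ≤ M k ω := le_of_not_ge h
      simp [Set.piecewise, h, min_eq_right this]
end

section
/- Suppose (V_k)_{k=0}^{n−1} is a sequence of random variables with each V_k ℱ_k-measurable such that: V_{n−1} is an essential infimum of { E^Q[M | ℱ_{n−1}] : M ℱ_n-measurable, Q-integrable, l(M−S_n) P-integrable, E^P[ l(M − S_n) | ℱ_{n−1} ] ≤ α_n a.s. }; and for every k ∈ {1,…,n−1}, V_{k−1} is an essential infimum of { E^Q[M | ℱ_{k−1}] : M ℱ_k-measurable, Q-integrable, M ≥ V_k a.s., l(M−S_k) P-integrable, E^P[ l(M − S_k) | ℱ_{k−1} ] ≤ α_k a.s. }. Then for every k ∈ {0,…,n−1}, V_k is an essential infimum of the set { M_k : (M_t)_{t=k}^n ∈ ℳ_{TC,k} }. -/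
open MeasureTheory Filter
open scoped MeasureTheory

/-- Membership in `ℳ_{TC,k}`: a `Q`-supermartingale `(M_t)_{t=k}^n` with
`l(M_t - S_t)` `P`-integrable and `E^P[l(M_t - S_t)|F_{t-1}] ≤ α_t` a.s. for every
`t ∈ {k+1,…,n}`. -/
def MemTC {Ω : Type*} {m0 : MeasurableSpace Ω}
    (𝓕 : MeasureTheory.Filtration ℕ m0) (P Q : Measure Ω)
    (S : ℕ → Ω → ℝ) (l : ℝ → ℝ) (α : ℕ → ℝ) (k n : ℕ)
    (M : ℕ → Ω → ℝ) : Prop :=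
  IsSupermartingaleOn 𝓕 Q M k n ∧
  ∀ t, k + 1 ≤ t → t ≤ n →
    Integrable (fun ω => l (M t ω - S t ω)) P ∧
    (P[fun ω => l (M t ω - S t ω)|𝓕 (t - 1)]) ≤ᵐ[P] fun _ => α t

/-- `W` is an essential infimum (under `μ`) of the family `A` of random variables. -/
def IsEssInf {Ω : Type*} {m0 : MeasurableSpace Ω} (μ : Measure Ω)
    (A : Set (Ω → ℝ)) (W : Ω → ℝ) : Prop :=
  (∀ M ∈ A, W ≤ᵐ[μ] M) ∧ ∀ W' : Ω → ℝ, (∀ M ∈ A, W' ≤ᵐ[μ] M) → W' ≤ᵐ[μ] W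

/-!
Backward induction on `k`. Any `M ∈ ℳ_{TC,k-1}` has `M_{k-1} ≥ E^Q[M_k | ℱ_{k-1}]` with `M_k`
admissible in the one-step problem at time `k`, which gives the lower bound `V_{k-1} ≤ M_{k-1}`.
Conversely, `ℳ_{TC,k}` is stable under pasting along sets of `ℱ_k`, so its time-`k` values are
directed downwards and `V_k` is the a.e. limit of a decreasing sequence `N^j_k` of them. For an
admissible `M ≥ V_k`, the process `N^j + (M - N^j_k)⁺`, preceded by its conditional expectation,
lies in `ℳ_{TC,k-1}` with time-`(k-1)` value `E^Q[M ⊔ N^j_k | ℱ_{k-1}]`, and these decrease to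
`E^Q[M | ℱ_{k-1}]` by conditional monotone convergence.
-/

open Topology

section General

variable {Ω : Type*} {m m0 : MeasurableSpace Ω} {μ : Measure Ω}

lemma IsEssInf.nonempty [NeZero μ] {A : Set (Ω → ℝ)} {W : Ω → ℝ} (h : IsEssInf μ A W) :
    A.Nonempty := by
  by_contra hA
  rw [Set.not_nonempty_iff_eq_empty] at hA
  obtain ⟨ω, hω⟩ := (h.2 (W + 1) (by simp [hA])).exists
  norm_num at hω

theorem tendsto_condExp_of_antitone (hm : m ≤ m0) [SigmaFinite (μ.trim hm)]
    {f : ℕ → Ω → ℝ} {F : Ω → ℝ} (hf : ∀ j, Integrable (f j) μ) (hF : Integrable F μ)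
    (hmono : ∀ᵐ ω ∂μ, Antitone fun j => f j ω)
    (hlim : ∀ᵐ ω ∂μ, Tendsto (fun j => f j ω) atTop (𝓝 (F ω))) :
    ∀ᵐ ω ∂μ, Tendsto (fun j => μ[f j|m] ω) atTop (𝓝 (μ[F|m] ω)) := by
  have hFle : ∀ j, F ≤ᵐ[μ] f j := fun j => by
    filter_upwards [hmono, hlim] with ω hω hω' using hω.le_of_tendsto hω' j
  have hcond_mono : ∀ j, μ[f (j + 1)|m] ≤ᵐ[μ] μ[f j|m] := fun j =>
    condExp_mono (hf _) (hf _) (by filter_upwards [hmono] with ω hω using hω j.le_succ)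
  refine tendsto_of_integral_tendsto_of_antitone (fun _ => integrable_condExp)
    integrable_condExp ?_ ?_ (ae_all_iff.2 fun j => condExp_mono hF (hf j) (hFle j))
  · simp_rw [integral_condExp hm]
    exact integral_tendsto_of_tendsto_of_antitone hf hF hmono hlim
  · filter_upwards [ae_all_iff.2 hcond_mono] with ω hω using antitone_nat_of_succ_le hω

lemma condExp_piecewise_le (hm : m ≤ m0) {A : Set Ω} [DecidablePred (· ∈ A)]
    (hA : MeasurableSet[m] A) {f g F G : Ω → ℝ} (hf : Integrable f μ) (hg : Integrable g μ)
    (hfF : μ[f|m] ≤ᵐ[μ] F) (hgG : μ[g|m] ≤ᵐ[μ] G) :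
    μ[A.piecewise f g|m] ≤ᵐ[μ] A.piecewise F G := by
  rw [← Set.indicator_add_compl_eq_piecewise]
  filter_upwards [condExp_add (hf.indicator (hm _ hA)) (hg.indicator (hm _ hA.compl)) m,
    condExp_indicator hf hA, condExp_indicator hg hA.compl, hfF, hgG] with ω hadd hf' hg' hF hG
  rw [hadd, Pi.add_apply, hf', hg']
  by_cases hω : ω ∈ A <;> simp [hω, hF, hG]

end General

lemma exists_antitone_tendsto_csInf_image {β : Type*} [SemilatticeInf β] {A : Set β}
    (hne : A.Nonempty) (hinf : ∀ a ∈ A, ∀ b ∈ A, a ⊓ b ∈ A) {J : β → ℝ} (hJ : MonotoneOn J A)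
    (hbdd : BddBelow (J '' A)) :
    ∃ K : ℕ → β, (∀ j, K j ∈ A) ∧ Antitone K ∧
      Tendsto (fun j => J (K j)) atTop (𝓝 (sInf (J '' A))) := by
  have hnear : ∀ j : ℕ, ∃ a ∈ A, J a < sInf (J '' A) + 1 / (j + 1) := fun j => by
    obtain ⟨_, ⟨a, ha, rfl⟩, h⟩ := exists_lt_of_csInf_lt (hne.image J)
      (lt_add_of_pos_right (sInf (J '' A)) (Nat.one_div_pos_of_nat (n := j)))
    exact ⟨a, ha, h⟩
  choose f hfA hf using hnear
  have hKA : ∀ j, (Finset.range (j + 1)).inf' Finset.nonempty_range_add_one f ∈ A := fun j =>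
    Finset.inf'_induction _ _ hinf fun i _ => hfA i
  refine ⟨_, hKA, fun i j hij => Finset.inf'_mono f (by simpa using hij) _, ?_⟩
  have hupper : Tendsto (fun j : ℕ => sInf (J '' A) + 1 / (j + 1)) atTop (𝓝 (sInf (J '' A))) := by
    simpa using tendsto_one_div_add_atTop_nhds_zero_nat.const_add (sInf (J '' A))
  refine tendsto_of_tendsto_of_tendsto_of_le_of_le tendsto_const_nhds hupper
    (fun j => csInf_le hbdd ⟨_, hKA j, rfl⟩) fun j => ?_
  exact (hJ (hKA j) (hfA j) (Finset.inf'_le f (Finset.self_mem_range_succ j))).trans (hf j).le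

section EssInf

variable {Ω : Type*} {m0 : MeasurableSpace Ω} {μ : Measure Ω} [IsFiniteMeasure μ]

lemma norm_arctan_le (x : ℝ) : ‖Real.arctan x‖ ≤ Real.pi / 2 := by
  rw [Real.norm_eq_abs, abs_le]
  exact ⟨(Real.arctan_mem_Ioo x).1.le, (Real.arctan_mem_Ioo x).2.le⟩

lemma integrable_arctan_comp {f : Ω → ℝ} (hf : AEMeasurable f μ) :
    Integrable (fun ω => Real.arctan (f ω)) μ :=
  .of_bound (Real.continuous_arctan.measurable.comp_aemeasurable hf).aestronglyMeasurable _
    (ae_of_all _ fun ω => norm_arctan_le (f ω))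

lemma tendsto_integral_arctan_comp {f : ℕ → Ω → ℝ} {F : Ω → ℝ} (hf : ∀ j, AEMeasurable (f j) μ)
    (hlim : ∀ᵐ ω ∂μ, Tendsto (fun j => f j ω) atTop (𝓝 (F ω))) :
    Tendsto (fun j => ∫ ω, Real.arctan (f j ω) ∂μ) atTop (𝓝 (∫ ω, Real.arctan (F ω) ∂μ)) :=
  tendsto_integral_of_dominated_convergence _ (fun j => (integrable_arctan_comp (hf j)).1)
    (integrable_const _) (fun _ => ae_of_all _ fun _ => norm_arctan_le _)
    (hlim.mono fun _ h => (Real.continuous_arctan.tendsto _).comp h)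

theorem IsEssInf.exists_antitone_tendsto [NeZero μ] {A : Set (Ω → ℝ)} {W : Ω → ℝ}
    (hW : IsEssInf μ A W) (hmeas : ∀ f ∈ A, AEMeasurable f μ)
    (hinf : ∀ f ∈ A, ∀ g ∈ A, f ⊓ g ∈ A) :
    ∃ K : ℕ → Ω → ℝ, (∀ j, K j ∈ A) ∧ Antitone K ∧
      ∀ᵐ ω ∂μ, Tendsto (fun j => K j ω) atTop (𝓝 (W ω)) := by
  set J : (Ω → ℝ) → ℝ := fun f => ∫ ω, Real.arctan (f ω) ∂μ
  have hJ : MonotoneOn J A := fun f hf g hg hfg =>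
    integral_mono (integrable_arctan_comp (hmeas f hf)) (integrable_arctan_comp (hmeas g hg))
      fun ω => Real.arctan_strictMono.monotone (hfg ω)
  have hbdd : BddBelow (J '' A) := by
    refine ⟨-(Real.pi / 2 * μ.real Set.univ), ?_⟩
    rintro _ ⟨f, -, rfl⟩
    exact neg_le_of_abs_le
      (norm_integral_le_of_norm_le_const (ae_of_all _ fun ω => norm_arctan_le (f ω)))
  obtain ⟨K, hKA, hK, hJK⟩ := exists_antitone_tendsto_csInf_image hW.nonempty hinf hJ hbdd
  have hKmeas : ∀ j, AEMeasurable (K j) μ := fun j => hmeas _ (hKA j)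
  set g : Ω → ℝ := fun ω => ⨅ j, K j ω
  have hWK : ∀ᵐ ω ∂μ, ∀ j, W ω ≤ K j ω := ae_all_iff.2 fun j => hW.1 _ (hKA j)
  have hKg : ∀ᵐ ω ∂μ, Tendsto (fun j => K j ω) atTop (𝓝 (g ω)) := by
    filter_upwards [hWK] with ω hω
    exact tendsto_atTop_ciInf (fun i j hij => hK hij ω) ⟨W ω, by rintro _ ⟨j, rfl⟩; exact hω j⟩
  have hgmeas : AEMeasurable g μ := aemeasurable_of_tendsto_metrizable_ae atTop hKmeas hKg
  have hJg : J g = sInf (J '' A) :=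
    tendsto_nhds_unique (tendsto_integral_arctan_comp hKmeas hKg) hJK
  -- `J g` is already the infimum of `J` over `A`, so `J (g ⊓ f) = J g`, which forces `g ⊓ f = g`.
  have hg_le : ∀ f ∈ A, g ≤ᵐ[μ] f := by
    intro f hf
    have hJle : J g ≤ J (g ⊓ f) := by
      rw [hJg]
      refine ge_of_tendsto (tendsto_integral_arctan_comp (fun j => (hKmeas j).inf (hmeas f hf))
        (hKg.mono fun ω h => h.min tendsto_const_nhds)) (Eventually.of_forall fun j => ?_)
      exact csInf_le hbdd ⟨_, hinf _ (hKA j) f hf, rfl⟩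
    have hinf_int := integrable_arctan_comp (hgmeas.inf (hmeas f hf))
    have hle : ∀ ω, Real.arctan ((g ⊓ f) ω) ≤ Real.arctan (g ω) := fun _ =>
      Real.arctan_strictMono.monotone inf_le_left
    have hg_int := integrable_arctan_comp hgmeas
    have heq := (integral_eq_iff_of_ae_le hinf_int hg_int (ae_of_all _ hle)).1
      (le_antisymm (integral_mono hinf_int hg_int hle) hJle)
    filter_upwards [heq] with ω hω
    exact inf_eq_left.1 (Real.arctan_injective hω)
  have hgW : g ≤ᵐ[μ] W := hW.2 g hg_le
  refine ⟨K, hKA, hK, ?_⟩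
  filter_upwards [hKg, hgW, hWK] with ω hω hgω hWω
  rwa [le_antisymm hgω (le_ciInf hWω)] at hω

end EssInf

section TimeConsistent

variable {Ω : Type*} {m0 : MeasurableSpace Ω} {𝓕 : Filtration ℕ m0} {P Q : Measure Ω}
  {S : ℕ → Ω → ℝ} {l : ℝ → ℝ} {α : ℕ → ℝ} {k n : ℕ}

-- For `k < t ≤ n`, the loss clause of `MemTC 𝓕 P Q S l α k n M` unfolds to
-- `LossConstraint 𝓕 P S l α t (M t)`.
def LossConstraint (𝓕 : Filtration ℕ m0) (P : Measure Ω) (S : ℕ → Ω → ℝ) (l : ℝ → ℝ)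
    (α : ℕ → ℝ) (t : ℕ) (X : Ω → ℝ) : Prop :=
  Integrable (fun ω => l (X ω - S t ω)) P ∧
    (P[fun ω => l (X ω - S t ω)|𝓕 (t - 1)]) ≤ᵐ[P] fun _ => α t

lemma LossConstraint.mono [IsFiniteMeasure P] (hl : Antitone l) {c : ℝ} (hc : ∀ x, c ≤ l x)
    {t : ℕ} (hS : Measurable (S t)) {X Y : Ω → ℝ} (hX : LossConstraint 𝓕 P S l α t X)
    (hY : Measurable Y) (hXY : X ≤ᵐ[P] Y) : LossConstraint 𝓕 P S l α t Y := by
  have hle : (fun ω => l (Y ω - S t ω)) ≤ᵐ[P] fun ω => l (X ω - S t ω) := by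
    filter_upwards [hXY] with ω h using hl (sub_le_sub_right h _)
  have hint : Integrable (fun ω => l (Y ω - S t ω)) P :=
    integrable_of_le_of_le (hl.measurable.comp (hY.sub hS)).aestronglyMeasurable
      (ae_of_all _ fun _ => hc _) hle (integrable_const c) hX.1
  exact ⟨hint, (condExp_mono hint hX.1 hle).trans hX.2⟩

lemma MemTC.of_le {k' : ℕ} {M : ℕ → Ω → ℝ} (hM : MemTC 𝓕 P Q S l α k n M) (hk : k ≤ k') :
    MemTC 𝓕 P Q S l α k' n M :=
  ⟨⟨fun t ht => hM.1.1 t (hk.trans ht), fun t ht => hM.1.2.1 t (hk.trans ht),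
    fun t ht => hM.1.2.2 t (hk.trans ht)⟩, fun t ht => hM.2 t (by omega)⟩

lemma MemTC.condExp_le_pred (hPQ : P ≪ Q) {M : ℕ → Ω → ℝ}
    (hM : MemTC 𝓕 P Q S l α (k - 1) n M) (hk : 1 ≤ k) (hkn : k ≤ n) :
    Q[M k|𝓕 (k - 1)] ≤ᵐ[P] M (k - 1) := by
  have h := hM.1.2.2 (k - 1) le_rfl (by omega)
  rw [Nat.sub_add_cancel hk] at h
  exact hPQ.ae_le h

lemma memTC_self {X : ℕ → Ω → ℝ} (hX : StronglyMeasurable[𝓕 k] (X k))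
    (hXint : Integrable (X k) Q) : MemTC 𝓕 P Q S l α k k X := by
  refine ⟨⟨fun t ht htk => ?_, fun t ht htk => ?_, fun t ht htk => by omega⟩,
    fun t ht htk => by omega⟩
  · obtain rfl : t = k := le_antisymm htk ht
    exact hX
  · obtain rfl : t = k := le_antisymm htk ht
    exact hXint

lemma MemTC.piecewise {N N' : ℕ → Ω → ℝ} (hN : MemTC 𝓕 P Q S l α k n N)
    (hN' : MemTC 𝓕 P Q S l α k n N') {A : Set Ω} [DecidablePred (· ∈ A)]
    (hA : MeasurableSet[𝓕 k] A) :
    MemTC 𝓕 P Q S l α k n fun t => A.piecewise (N t) (N' t) := by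
  obtain ⟨⟨hNm, hNi, hNs⟩, hNl⟩ := hN
  obtain ⟨⟨hN'm, hN'i, hN's⟩, hN'l⟩ := hN'
  have hA0 : MeasurableSet A := 𝓕.le k _ hA
  refine ⟨⟨fun t ht htn => (hNm t ht htn).piecewise (𝓕.mono ht _ hA) (hN'm t ht htn),
    fun t ht htn => Integrable.piecewise hA0 (hNi t ht htn).integrableOn
      (hN'i t ht htn).integrableOn, fun t ht htn => ?_⟩, fun t ht htn => ?_⟩
  · exact condExp_piecewise_le (𝓕.le t) (𝓕.mono ht _ hA) (hNi _ (by omega) htn)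
      (hN'i _ (by omega) htn) (hNs t ht htn) (hN's t ht htn)
  · have hcomp : (fun ω => l (A.piecewise (N t) (N' t) ω - S t ω)) =
        A.piecewise (fun ω => l (N t ω - S t ω)) (fun ω => l (N' t ω - S t ω)) := by
      funext ω
      by_cases hω : ω ∈ A <;> simp [hω]
    refine ⟨?_, ?_⟩
    · rw [hcomp]
      exact Integrable.piecewise hA0 (hNl t ht htn).1.integrableOn (hN'l t ht htn).1.integrableOn
    · rw [hcomp, ← Set.piecewise_same A (fun _ => α t)]
      exact condExp_piecewise_le (𝓕.le _) (𝓕.mono (by omega) _ hA) (hNl t ht htn).1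
        (hN'l t ht htn).1 (hNl t ht htn).2 (hN'l t ht htn).2

lemma MemTC.exists_inf {N N' : ℕ → Ω → ℝ} (hN : MemTC 𝓕 P Q S l α k n N)
    (hN' : MemTC 𝓕 P Q S l α k n N') (hkn : k ≤ n) :
    ∃ N'', MemTC 𝓕 P Q S l α k n N'' ∧ N'' k = N k ⊓ N' k := by
  classical
  refine ⟨_, hN.piecewise hN' (measurableSet_le (hN.1.1 k le_rfl hkn).measurable
    (hN'.1.1 k le_rfl hkn).measurable), ?_⟩
  funext ω
  by_cases h : N k ω ≤ N' k ω
  · simp [h]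
  · simp [h, le_of_not_ge h]

lemma MemTC.add_right_of_nonneg [IsFiniteMeasure P] [IsFiniteMeasure Q] (hl : Antitone l) {c : ℝ}
    (hc : ∀ x, c ≤ l x) (hS : Adapted 𝓕 S) {N : ℕ → Ω → ℝ} (hN : MemTC 𝓕 P Q S l α k n N)
    {r : Ω → ℝ} (hr : StronglyMeasurable[𝓕 k] r) (hrint : Integrable r Q) (hr0 : 0 ≤ r) :
    MemTC 𝓕 P Q S l α k n fun t => N t + r := by
  obtain ⟨⟨hNm, hNi, hNs⟩, hNl⟩ := hN
  have hr' : ∀ t, k ≤ t → StronglyMeasurable[𝓕 t] r := fun t ht => hr.mono (𝓕.mono ht)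
  refine ⟨⟨fun t ht htn => (hNm t ht htn).add (hr' t ht),
    fun t ht htn => (hNi t ht htn).add hrint, fun t ht htn => ?_⟩, fun t ht htn => ?_⟩
  · have hadd := condExp_add (hNi (t + 1) (by omega) htn) hrint (𝓕 t)
    rw [condExp_of_stronglyMeasurable (𝓕.le t) (hr' t ht) hrint] at hadd
    filter_upwards [hadd, hNs t ht htn] with ω hω hω'
    rw [hω, Pi.add_apply, Pi.add_apply]
    exact add_le_add_left hω' _
  · exact LossConstraint.mono hl hc ((hS t).mono (𝓕.le t) le_rfl) (hNl t ht htn)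
      (((hNm t (by omega) htn).add (hr' t (by omega))).mono (𝓕.le t)).measurable
      (ae_of_all _ fun ω => le_add_of_nonneg_right (hr0 ω))

lemma MemTC.cons {N : ℕ → Ω → ℝ} (hN : MemTC 𝓕 P Q S l α k n N) (hk : 1 ≤ k)
    (hNk : LossConstraint 𝓕 P S l α k (N k)) :
    MemTC 𝓕 P Q S l α (k - 1) n fun t => if t < k then Q[N k|𝓕 (k - 1)] else N t := by
  obtain ⟨⟨hNm, hNi, hNs⟩, hNl⟩ := hN
  refine ⟨⟨fun t ht htn => ?_, fun t ht htn => ?_, fun t ht htn => ?_⟩, fun t ht htn => ?_⟩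
  · dsimp only
    split_ifs with htk
    · obtain rfl : t = k - 1 := by omega
      exact stronglyMeasurable_condExp
    · exact hNm t (by omega) htn
  · dsimp only
    split_ifs with htk
    · exact integrable_condExp
    · exact hNi t (by omega) htn
  · by_cases htk : t < k
    · obtain rfl : t = k - 1 := by omega
      simp only [htk, if_true, Nat.sub_add_cancel hk, lt_irrefl, if_false]
      rfl
    · simp only [htk, show ¬t + 1 < k by omega, if_false]
      exact hNs t (by omega) htn
  · simp only [show ¬t < k by omega, if_false]
    obtain rfl | hkt := (show k = t ∨ k < t by omega)
    · exact hNk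
    · exact hNl t hkt htn

lemma MemTC.exists_extend [IsFiniteMeasure P] [IsFiniteMeasure Q] (hl : Antitone l) {c : ℝ}
    (hc : ∀ x, c ≤ l x) (hS : Adapted 𝓕 S) (hk : 1 ≤ k) (hkn : k ≤ n) {N : ℕ → Ω → ℝ}
    (hN : MemTC 𝓕 P Q S l α k n N) {M : Ω → ℝ} (hM : StronglyMeasurable[𝓕 k] M)
    (hMint : Integrable M Q) (hMloss : LossConstraint 𝓕 P S l α k M) :
    ∃ R, MemTC 𝓕 P Q S l α (k - 1) n R ∧ R (k - 1) = Q[M ⊔ N k|𝓕 (k - 1)] := by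
  have hNk := hN.1.1 k le_rfl hkn
  set r : Ω → ℝ := fun ω => max (M ω - N k ω) 0
  have hr : StronglyMeasurable[𝓕 k] r :=
    ((hM.sub hNk).measurable.max measurable_const).stronglyMeasurable
  have hsum : N k + r = M ⊔ N k := by
    funext ω
    simp only [r, Pi.add_apply, Pi.sup_apply, ← max_add_add_left, add_sub_cancel, add_zero]
  have hN' := hN.add_right_of_nonneg hl hc hS hr (hMint.sub (hN.1.2.1 k le_rfl hkn)).pos_part
    fun ω => le_max_right _ _
  refine ⟨_, hN'.cons hk ?_, ?_⟩
  · rw [hsum]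
    exact hMloss.mono hl hc ((hS k).mono (𝓕.le k) le_rfl)
      ((hM.measurable.sup hNk.measurable).mono (𝓕.le k) le_rfl) (ae_of_all _ fun _ => le_sup_left)
  · simp only [Nat.sub_lt hk one_pos, if_true, hsum]

theorem isEssInf_memTC_last (hPQ : P ≪ Q) (hn : 1 ≤ n) {V : Ω → ℝ}
    (hV : IsEssInf P {f : Ω → ℝ | ∃ M : Ω → ℝ,
        StronglyMeasurable[𝓕 n] M ∧ Integrable M Q ∧
        Integrable (fun ω => l (M ω - S n ω)) P ∧
        ((P[fun ω => l (M ω - S n ω)|𝓕 (n - 1)]) ≤ᵐ[P] fun _ => α n) ∧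
        f = Q[M|𝓕 (n - 1)]} V) :
    IsEssInf P {f : Ω → ℝ | ∃ M : ℕ → Ω → ℝ,
      MemTC 𝓕 P Q S l α (n - 1) n M ∧ f = M (n - 1)} V := by
  refine ⟨?_, fun W hW => hV.2 W ?_⟩
  · rintro _ ⟨M, hM, rfl⟩
    have hloss := hM.2 n (by omega) le_rfl
    exact (hV.1 _ ⟨M n, hM.1.1 n (by omega) le_rfl, hM.1.2.1 n (by omega) le_rfl, hloss.1,
      hloss.2, rfl⟩).trans (hM.condExp_le_pred hPQ hn le_rfl)
  · rintro _ ⟨M, hM, hMint, hMl, hMc, rfl⟩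
    have hR := (memTC_self (X := fun _ => M) hM hMint).cons hn ⟨hMl, hMc⟩
    have h := hW _ ⟨_, hR, rfl⟩
    rwa [if_pos (Nat.sub_lt hn one_pos)] at h

theorem isEssInf_memTC_pred [IsProbabilityMeasure P] [IsFiniteMeasure Q] (hPQ : P ≪ Q)
    (hQP : Q ≪ P) (hl : Antitone l) {c : ℝ} (hc : ∀ x, c ≤ l x) (hS : Adapted 𝓕 S)
    (hk : 1 ≤ k) (hkn : k ≤ n) {U V : Ω → ℝ}
    (hV : IsEssInf P {f : Ω → ℝ | ∃ M : Ω → ℝ,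
        StronglyMeasurable[𝓕 k] M ∧ Integrable M Q ∧
        (U ≤ᵐ[P] M) ∧
        Integrable (fun ω => l (M ω - S k ω)) P ∧
        ((P[fun ω => l (M ω - S k ω)|𝓕 (k - 1)]) ≤ᵐ[P] fun _ => α k) ∧
        f = Q[M|𝓕 (k - 1)]} V)
    (hU : IsEssInf P {f : Ω → ℝ | ∃ M : ℕ → Ω → ℝ, MemTC 𝓕 P Q S l α k n M ∧ f = M k} U) :
    IsEssInf P {f : Ω → ℝ | ∃ M : ℕ → Ω → ℝ,
      MemTC 𝓕 P Q S l α (k - 1) n M ∧ f = M (k - 1)} V := by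
  refine ⟨?_, fun W hW => hV.2 W ?_⟩
  · rintro _ ⟨M, hM, rfl⟩
    have hloss := hM.2 k (by omega) hkn
    exact (hV.1 _ ⟨M k, hM.1.1 k (by omega) hkn, hM.1.2.1 k (by omega) hkn,
      hU.1 _ ⟨M, hM.of_le (by omega), rfl⟩, hloss.1, hloss.2, rfl⟩).trans
      (hM.condExp_le_pred hPQ hk hkn)
  rintro _ ⟨M, hM, hMint, hUM, hMl, hMc, rfl⟩
  obtain ⟨K, hKA, hK, hKU⟩ := hU.exists_antitone_tendsto
    (fun _ ⟨N, hN, hf⟩ => hf ▸ ((hN.1.1 k le_rfl hkn).mono (𝓕.le k)).measurable.aemeasurable)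
    (fun _ ⟨N, hN, hf⟩ _ ⟨N', hN', hg⟩ => by
      obtain ⟨N'', hN'', hval⟩ := hN.exists_inf hN' hkn
      exact ⟨N'', hN'', by rw [hval, hf, hg]⟩)
  choose N hN hNK using hKA
  have hKint : ∀ j, Integrable (K j) Q := fun j => hNK j ▸ (hN j).1.2.1 k le_rfl hkn
  have hW_le : ∀ j, W ≤ᵐ[P] Q[M ⊔ K j|𝓕 (k - 1)] := fun j => by
    obtain ⟨R, hR, hRval⟩ := (hN j).exists_extend hl hc hS hk hkn hM hMint ⟨hMl, hMc⟩
    rw [hNK j, ← hRval]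
    exact hW _ ⟨R, hR, rfl⟩
  have hlim := tendsto_condExp_of_antitone (𝓕.le (k - 1)) (fun j => hMint.sup (hKint j)) hMint
    (ae_of_all _ fun ω i j hij => sup_le_sup_left (hK hij ω) _) (by
      filter_upwards [hQP.ae_le hKU, hQP.ae_le hUM] with ω hω hUMω
      simpa [max_eq_left hUMω] using (tendsto_const_nhds (x := M ω)).max hω)
  filter_upwards [hPQ.ae_le hlim, ae_all_iff.2 hW_le] with ω hω hWω
  exact ge_of_tendsto' hω hWω

end TimeConsistent

theorem stmt_8_general
    {Ω : Type*} {m0 : MeasurableSpace Ω} (P Q : Measure Ω)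
    [IsProbabilityMeasure P] [IsProbabilityMeasure Q]
    (hPQ : P ≪ Q) (hQP : Q ≪ P)
    (𝓕 : Filtration ℕ m0) (n : ℕ) (hn : 1 ≤ n)
    (l : ℝ → ℝ) (hdec : Antitone l)
    (hbdd : ∃ c : ℝ, ∀ x : ℝ, c ≤ l x)
    (S : ℕ → Ω → ℝ) (hS : Adapted 𝓕 S)
    (α : ℕ → ℝ)
    (V : ℕ → Ω → ℝ)
    (hVlast : IsEssInf P {f : Ω → ℝ | ∃ M : Ω → ℝ,
        StronglyMeasurable[𝓕 n] M ∧ Integrable M Q ∧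
        Integrable (fun ω => l (M ω - S n ω)) P ∧
        ((P[fun ω => l (M ω - S n ω)|𝓕 (n - 1)]) ≤ᵐ[P] fun _ => α n) ∧
        f = Q[M|𝓕 (n - 1)]} (V (n - 1)))
    (hVrec : ∀ k, 1 ≤ k → k ≤ n - 1 →
      IsEssInf P {f : Ω → ℝ | ∃ M : Ω → ℝ,
        StronglyMeasurable[𝓕 k] M ∧ Integrable M Q ∧
        (V k ≤ᵐ[P] M) ∧
        Integrable (fun ω => l (M ω - S k ω)) P ∧
        ((P[fun ω => l (M ω - S k ω)|𝓕 (k - 1)]) ≤ᵐ[P] fun _ => α k) ∧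
        f = Q[M|𝓕 (k - 1)]} (V (k - 1))) :
    ∀ k, k ≤ n - 1 →
      IsEssInf P {f : Ω → ℝ | ∃ M : ℕ → Ω → ℝ,
        MemTC 𝓕 P Q S l α k n M ∧ f = M k} (V k) := by
  obtain ⟨c, hc⟩ := hbdd
  intro k hk
  induction hk using Nat.decreasingInduction with
  | self => exact isEssInf_memTC_last hPQ hn hVlast
  | of_succ k hk ih =>
    exact isEssInf_memTC_pred hPQ hQP hdec hc hS (by omega) (by omega)
      (hVrec (k + 1) (by omega) (by omega)) ih

/-- Proposition 3.5 (dynamic programming for the time-consistent constraint): if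
`(V_k)` satisfies the backward recursion (3.2), then `V_k` is an essential infimum
of `{ M_k : (M_t)_{t=k}^n ∈ ℳ_{TC,k} }` for every `k ∈ {0,…,n-1}`. -/
theorem stmt_8
    {Ω : Type*} {m0 : MeasurableSpace Ω} (P Q : Measure Ω)
    [IsProbabilityMeasure P] [IsProbabilityMeasure Q]
    (hPQ : P ≪ Q) (hQP : Q ≪ P)
    (𝓕 : Filtration ℕ m0) (n : ℕ) (hn : 1 ≤ n)
    (l : ℝ → ℝ) (hconv : ConvexOn ℝ Set.univ l) (hdec : Antitone l)
    (hbdd : ∃ c : ℝ, ∀ x : ℝ, c ≤ l x)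
    (S : ℕ → Ω → ℝ) (hS : Adapted 𝓕 S) (hSint : ∀ t, Integrable (S t) Q)
    (α : ℕ → ℝ)
    (V : ℕ → Ω → ℝ) (hVmeas : ∀ k, k ≤ n - 1 → StronglyMeasurable[𝓕 k] (V k))
    (hVlast : IsEssInf P {f : Ω → ℝ | ∃ M : Ω → ℝ,
        StronglyMeasurable[𝓕 n] M ∧ Integrable M Q ∧
        Integrable (fun ω => l (M ω - S n ω)) P ∧
        ((P[fun ω => l (M ω - S n ω)|𝓕 (n - 1)]) ≤ᵐ[P] fun _ => α n) ∧
        f = Q[M|𝓕 (n - 1)]} (V (n - 1)))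
    (hVrec : ∀ k, 1 ≤ k → k ≤ n - 1 →
      IsEssInf P {f : Ω → ℝ | ∃ M : Ω → ℝ,
        StronglyMeasurable[𝓕 k] M ∧ Integrable M Q ∧
        (V k ≤ᵐ[P] M) ∧
        Integrable (fun ω => l (M ω - S k ω)) P ∧
        ((P[fun ω => l (M ω - S k ω)|𝓕 (k - 1)]) ≤ᵐ[P] fun _ => α k) ∧
        f = Q[M|𝓕 (k - 1)]} (V (k - 1))) :
    ∀ k, k ≤ n - 1 →
      IsEssInf P {f : Ω → ℝ | ∃ M : ℕ → Ω → ℝ,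
        MemTC 𝓕 P Q S l α k n M ∧ f = M k} (V k) :=
  stmt_8_general P Q hPQ hQP 𝓕 n hn l hdec hbdd S hS α V hVlast hVrec
end

section
/- Assume P = Q, let l(x) = x^- = max(−x, 0), and let α_k > 0 for every k ∈ {1,…,n}. Define ŴV_{n−1} = E[ S_n | ℱ_{n−1} ] − α_n and, for k ∈ {1,…,n−1}, ŴV_{k−1} = max{ E[ ŴV_k | ℱ_{k−1} ], E[ ŴV_k ∨ S_k − α_k | ℱ_{k−1} ] }. Then for every t ∈ {0,…,n−1}, ŴV_t is an essential infimum of { M_t : (M_s)_{s=t}^n ∈ ℳ_{TC,t} }. -/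
/-!
For `M ∈ ℳ_{TC,t}` the identity `M_{k+1} + (M_{k+1} - S_{k+1})⁻ = M_{k+1} ∨ S_{k+1}`, the
supermartingale property and the loss budget `E[(M_{k+1} - S_{k+1})⁻ | ℱ_k] ≤ α_{k+1}` bound both
terms of the recursion for `V̂_k` by `M_k`, so backward induction gives `V̂_k ≤ M_k`.

Conversely the bound is attained by `M_t = V̂_t`, `M_k = V̂_k + λ_k (S_k - V̂_k)⁺` for `k > t`,
with the `ℱ_{k-1}`-measurable weight `λ_k = (g_k - α_k)⁺ / g_k`, `g_k = E[(S_k - V̂_k)⁺ | ℱ_{k-1}]`: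
it hedges exactly the part of the expected shortfall that the budget `α_k` cannot absorb, so
`E[M_k | ℱ_{k-1}] = E[V̂_k | ℱ_{k-1}] + (g_k - α_k)⁺ = V̂_{k-1}` and
`E[(M_k - S_k)⁻ | ℱ_{k-1}] = min(g_k, α_k) ≤ α_k`.
-/

open MeasureTheory Filter
open scoped MeasureTheory

/-- Membership in `ℳ_{TC,k}` with loss function `l(x) = x⁻ = max(-x,0)`, under
`P = Q`: a `P`-supermartingale `(M_t)_{t=k}^n` with `(M_t - S_t)⁻` integrable and
`E[(M_t - S_t)⁻ | F_{t-1}] ≤ α_t` a.s. for every `t ∈ {k+1,…,n}`. -/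
def MemTCneg {Ω : Type*} {m0 : MeasurableSpace Ω}
    (𝓕 : MeasureTheory.Filtration ℕ m0) (P : Measure Ω)
    (S : ℕ → Ω → ℝ) (α : ℕ → ℝ) (k n : ℕ) (M : ℕ → Ω → ℝ) : Prop :=
  IsSupermartingaleOn 𝓕 P M k n ∧
  ∀ t, k + 1 ≤ t → t ≤ n →
    Integrable (fun ω => max (-(M t ω - S t ω)) 0) P ∧
    (P[fun ω => max (-(M t ω - S t ω)) 0|𝓕 (t - 1)]) ≤ᵐ[P] fun _ => α t

lemma max_eq_add_max_sub_zero (v s : ℝ) : max v s = v + max (s - v) 0 := by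
  rw [← max_add_add_left, add_zero, add_sub_cancel, max_comm]

lemma max_sub_zero_div_nonneg {a : ℝ} (ha : 0 ≤ a) (g : ℝ) : 0 ≤ max (g - a) 0 / g := by
  rcases le_total g a with h | h
  · simp [max_eq_right (sub_nonpos.2 h)]
  · exact div_nonneg (le_max_right _ _) (ha.trans h)

lemma max_sub_zero_div_le_one {a : ℝ} (ha : 0 ≤ a) (g : ℝ) : max (g - a) 0 / g ≤ 1 := by
  rcases le_total g a with h | h
  · simp [max_eq_right (sub_nonpos.2 h)]
  · rcases (ha.trans h).eq_or_lt with hg | hg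
    · simp [← hg]
    · rw [div_le_one hg, max_eq_left (sub_nonneg.2 h)]; linarith

lemma max_sub_zero_div_mul_self {a : ℝ} (ha : 0 ≤ a) (g : ℝ) :
    max (g - a) 0 / g * g = max (g - a) 0 := by
  rcases eq_or_ne g 0 with rfl | hg
  · simp [ha]
  · exact div_mul_cancel₀ _ hg

lemma one_sub_max_sub_zero_div_mul_self_le {a : ℝ} (ha : 0 ≤ a) (g : ℝ) :
    (1 - max (g - a) 0 / g) * g ≤ a := by
  rw [sub_mul, one_mul, max_sub_zero_div_mul_self ha]
  linarith [le_max_left (g - a) 0]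

noncomputable def valueStep {Ω : Type*} {m0 : MeasurableSpace Ω} (μ : Measure Ω)
    (m : MeasurableSpace Ω) (V S : Ω → ℝ) (a : ℝ) : Ω → ℝ :=
  fun ω => max (μ[V|m] ω) (μ[fun ω' => max (V ω') (S ω') - a|m] ω)

/-- The weight lies in `[0, 1]` pointwise, also where the conditional expectation `g` is `≤ 0`
(there `(g - a)⁺ = 0`, and `x / 0 = 0`). -/
noncomputable def hedgeWeight {Ω : Type*} {m0 : MeasurableSpace Ω} (μ : Measure Ω)
    (m : MeasurableSpace Ω) (V S : Ω → ℝ) (a : ℝ) : Ω → ℝ :=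
  fun ω => max (μ[fun ω' => max (S ω' - V ω') 0|m] ω - a) 0 /
    μ[fun ω' => max (S ω' - V ω') 0|m] ω

noncomputable def hedgeStep {Ω : Type*} {m0 : MeasurableSpace Ω} (μ : Measure Ω)
    (m : MeasurableSpace Ω) (V S : Ω → ℝ) (a : ℝ) : Ω → ℝ :=
  fun ω => V ω + hedgeWeight μ m V S a ω * max (S ω - V ω) 0

section OneStep

variable {Ω : Type*} {m m0 : MeasurableSpace Ω} {μ : Measure Ω} {V S : Ω → ℝ} {a : ℝ}

lemma condExp_sub_const [IsFiniteMeasure μ] (hm : m ≤ m0) {f : Ω → ℝ} (hf : Integrable f μ)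
    (c : ℝ) : μ[fun ω => f ω - c|m] =ᵐ[μ] fun ω => μ[f|m] ω - c := by
  have h := condExp_sub (m := m) hf (integrable_const c)
  rw [condExp_const hm] at h
  exact h

lemma condExp_sub_le_of_le_max {M₀ M₁ X : Ω → ℝ} (hX : Integrable X μ)
    (hM₁ : Integrable M₁ μ) (hloss : Integrable (fun ω => max (-(M₁ ω - S ω)) 0) μ)
    (hsuper : μ[M₁|m] ≤ᵐ[μ] M₀) (hloss_le : μ[fun ω => max (-(M₁ ω - S ω)) 0|m] ≤ᵐ[μ] fun _ => a)
    (hXle : X ≤ᵐ[μ] fun ω => max (M₁ ω) (S ω)) :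
    (fun ω => μ[X|m] ω - a) ≤ᵐ[μ] M₀ := by
  have hsum : (fun ω => max (M₁ ω) (S ω)) = M₁ + fun ω => max (-(M₁ ω - S ω)) 0 := by
    ext ω; rw [Pi.add_apply, neg_sub, max_eq_add_max_sub_zero]
  rw [hsum] at hXle
  filter_upwards [condExp_mono hX (hM₁.add hloss) hXle, condExp_add hM₁ hloss m, hsuper,
    hloss_le] with ω hmono hadd hs hl
  rw [hadd, Pi.add_apply] at hmono
  linarith

lemma stronglyMeasurable_valueStep : StronglyMeasurable[m] (valueStep μ m V S a) :=
  (stronglyMeasurable_condExp.measurable.max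
    stronglyMeasurable_condExp.measurable).stronglyMeasurable

lemma integrable_valueStep : Integrable (valueStep μ m V S a) μ :=
  integrable_condExp.sup integrable_condExp

lemma valueStep_congr_ae {V' : Ω → ℝ} (h : V =ᵐ[μ] V') :
    valueStep μ m V S a =ᵐ[μ] valueStep μ m V' S a := by
  have h' : (fun ω => max (V ω) (S ω) - a) =ᵐ[μ] fun ω => max (V' ω) (S ω) - a := by
    filter_upwards [h] with ω hω; rw [hω]
  filter_upwards [condExp_congr_ae (m := m) h, condExp_congr_ae (m := m) h'] with ω h₁ h₂
  simp only [valueStep, h₁, h₂]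

lemma valueStep_sub_const [IsFiniteMeasure μ] (hm : m ≤ m0) (ha : 0 ≤ a) (hS : Integrable S μ) :
    valueStep μ m (fun ω => S ω - a) S a =ᵐ[μ] fun ω => μ[S|m] ω - a := by
  have hmax : (fun ω => max (S ω - a) (S ω) - a) = fun ω => S ω - a := by
    ext ω; rw [max_eq_right (by linarith)]
  filter_upwards [condExp_sub_const hm hS a] with ω h
  simp only [valueStep, hmax, h, max_self]

lemma hedgeWeight_nonneg (ha : 0 ≤ a) (ω : Ω) : 0 ≤ hedgeWeight μ m V S a ω :=
  max_sub_zero_div_nonneg ha _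

lemma hedgeWeight_le_one (ha : 0 ≤ a) (ω : Ω) : hedgeWeight μ m V S a ω ≤ 1 :=
  max_sub_zero_div_le_one ha _

lemma stronglyMeasurable_hedgeWeight : StronglyMeasurable[m] (hedgeWeight μ m V S a) := by
  have hg := (stronglyMeasurable_condExp (m := m) (μ := μ)
    (f := fun ω' => max (S ω' - V ω') 0)).measurable
  exact ((hg.sub_const a).max measurable_const |>.div hg).stronglyMeasurable

lemma le_hedgeStep (ha : 0 ≤ a) : V ≤ hedgeStep μ m V S a := fun ω =>
  le_add_of_nonneg_right (mul_nonneg (hedgeWeight_nonneg ha ω) (le_max_right _ _))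

lemma negPart_hedgeStep_sub (ha : 0 ≤ a) :
    (fun ω => max (-(hedgeStep μ m V S a ω - S ω)) 0) =
      fun ω => (1 - hedgeWeight μ m V S a ω) * max (S ω - V ω) 0 := by
  ext ω
  have h₀ := hedgeWeight_nonneg (μ := μ) (m := m) (V := V) (S := S) ha ω
  have h₁ := hedgeWeight_le_one (μ := μ) (m := m) (V := V) (S := S) ha ω
  simp only [hedgeStep]
  rcases le_total (S ω - V ω) 0 with h | h
  · simp [h]
  · rw [max_eq_left h, max_eq_left (by nlinarith)]; ring

lemma integrable_mul_of_nonneg_of_le_one {c f : Ω → ℝ} (hc : StronglyMeasurable[m] c) (hm : m ≤ m0)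
    (hc₀ : ∀ ω, 0 ≤ c ω) (hc₁ : ∀ ω, c ω ≤ 1) (hf : Integrable f μ) :
    Integrable (fun ω => c ω * f ω) μ :=
  hf.bdd_mul (c := 1) (hc.mono hm).aestronglyMeasurable
    (ae_of_all _ fun ω => by rw [Real.norm_eq_abs, abs_le]; constructor <;> linarith [hc₀ ω, hc₁ ω])

lemma stronglyMeasurable_hedgeStep {m' : MeasurableSpace Ω} (hmm' : m ≤ m')
    (hV : StronglyMeasurable[m'] V) (hS : StronglyMeasurable[m'] S) :
    StronglyMeasurable[m'] (hedgeStep μ m V S a) :=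
  (hV.measurable.add ((stronglyMeasurable_hedgeWeight.mono hmm').measurable.mul
    ((hS.measurable.sub hV.measurable).max measurable_const))).stronglyMeasurable

lemma integrable_hedgeStep (hm : m ≤ m0) (ha : 0 ≤ a) (hV : Integrable V μ)
    (hS : Integrable S μ) : Integrable (hedgeStep μ m V S a) μ :=
  hV.add (integrable_mul_of_nonneg_of_le_one stronglyMeasurable_hedgeWeight hm (hedgeWeight_nonneg ha)
    (hedgeWeight_le_one ha) (hS.sub hV).pos_part)

lemma condExp_hedgeStep [IsFiniteMeasure μ] (hm : m ≤ m0) (ha : 0 ≤ a) (hV : Integrable V μ)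
    (hS : Integrable S μ) : μ[hedgeStep μ m V S a|m] =ᵐ[μ] valueStep μ m V S a := by
  set excess : Ω → ℝ := fun ω => max (S ω - V ω) 0
  have hexcess : Integrable excess μ := (hS.sub hV).pos_part
  have hhedge : Integrable (fun ω => hedgeWeight μ m V S a ω * excess ω) μ :=
    integrable_mul_of_nonneg_of_le_one stronglyMeasurable_hedgeWeight hm (hedgeWeight_nonneg ha)
      (hedgeWeight_le_one ha) hexcess
  have hstep : hedgeStep μ m V S a = V + fun ω => hedgeWeight μ m V S a ω * excess ω := rfl
  have hmax : (fun ω => max (V ω) (S ω) - a) = fun ω => (V + excess) ω - a := by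
    ext ω; rw [Pi.add_apply, max_eq_add_max_sub_zero]
  filter_upwards [condExp_add hV hhedge m,
    condExp_mul_of_stronglyMeasurable_left stronglyMeasurable_hedgeWeight hhedge hexcess,
    condExp_sub_const hm (hV.add hexcess) a, condExp_add hV hexcess m] with ω h₁ h₂ h₃ h₄
  rw [hstep, h₁, Pi.add_apply, show μ[fun ω => hedgeWeight μ m V S a ω * excess ω|m] ω =
    hedgeWeight μ m V S a ω * μ[excess|m] ω from h₂, valueStep, hmax, h₃, h₄, Pi.add_apply,
    hedgeWeight, max_sub_zero_div_mul_self ha, add_sub_assoc, ← max_add_add_left, add_zero,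
    max_comm]

lemma integrable_negPart_hedgeStep_sub (hm : m ≤ m0) (ha : 0 ≤ a) (hV : Integrable V μ)
    (hS : Integrable S μ) :
    Integrable (fun ω => max (-(hedgeStep μ m V S a ω - S ω)) 0) μ := by
  rw [negPart_hedgeStep_sub ha]
  exact integrable_mul_of_nonneg_of_le_one (stronglyMeasurable_const.sub stronglyMeasurable_hedgeWeight)
    hm (fun ω => sub_nonneg.2 (hedgeWeight_le_one ha ω))
    (fun ω => sub_le_self _ (hedgeWeight_nonneg ha ω)) (hS.sub hV).pos_part

lemma condExp_negPart_hedgeStep_sub_le (hm : m ≤ m0) (ha : 0 ≤ a) (hV : Integrable V μ)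
    (hS : Integrable S μ) :
    μ[fun ω => max (-(hedgeStep μ m V S a ω - S ω)) 0|m] ≤ᵐ[μ] fun _ => a := by
  have hint := integrable_negPart_hedgeStep_sub hm ha hV hS
  rw [negPart_hedgeStep_sub ha] at hint ⊢
  filter_upwards [condExp_mul_of_stronglyMeasurable_left
    (stronglyMeasurable_const.sub stronglyMeasurable_hedgeWeight) hint (hS.sub hV).pos_part]
    with ω h
  exact h.trans_le (one_sub_max_sub_zero_div_mul_self_le ha _)

end OneStep

lemma isEssInf_of_ae_eq_mem {Ω : Type*} {m0 : MeasurableSpace Ω} {μ : Measure Ω}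
    {A : Set (Ω → ℝ)} {W M : Ω → ℝ} (hle : ∀ M' ∈ A, W ≤ᵐ[μ] M') (hM : M ∈ A) (hMW : M =ᵐ[μ] W) :
    IsEssInf μ A W :=
  ⟨hle, fun _ hW' => (hW' M hM).trans_eq hMW⟩

section MultiStep

variable {Ω : Type*} {m0 : MeasurableSpace Ω} (P : Measure Ω) (𝓕 : Filtration ℕ m0)
  (S : ℕ → Ω → ℝ) (α : ℕ → ℝ) (n : ℕ)

/-- A measurable version of `V̂`, continued by `V̂_n = S_n - α_n`: one more step of the recursion
from there yields `E[S_n | ℱ_{n-1}] - α_n`. -/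
noncomputable def valueProcess (k : ℕ) : Ω → ℝ :=
  if n ≤ k then fun ω => S n ω - α n
  else valueStep P (𝓕 k) (valueProcess (k + 1)) (S (k + 1)) (α (k + 1))
termination_by n - k

noncomputable def hedgeProcess (t k : ℕ) : Ω → ℝ :=
  if k ≤ t then valueProcess P 𝓕 S α n t
  else hedgeStep P (𝓕 (k - 1)) (valueProcess P 𝓕 S α n k) (S k) (α k)

variable {P 𝓕 S α n}

lemma valueProcess_of_le {k : ℕ} (hk : n ≤ k) :
    valueProcess P 𝓕 S α n k = fun ω => S n ω - α n := by
  rw [valueProcess, if_pos hk]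

lemma valueProcess_of_lt {k : ℕ} (hk : k < n) :
    valueProcess P 𝓕 S α n k =
      valueStep P (𝓕 k) (valueProcess P 𝓕 S α n (k + 1)) (S (k + 1)) (α (k + 1)) := by
  rw [valueProcess, if_neg hk.not_ge]

lemma stronglyMeasurable_valueProcess (hS : Adapted 𝓕 S) {k : ℕ} (hk : k ≤ n) :
    StronglyMeasurable[𝓕 k] (valueProcess P 𝓕 S α n k) := by
  rcases hk.lt_or_eq with hk | rfl
  · rw [valueProcess_of_lt hk]
    exact stronglyMeasurable_valueStep
  · rw [valueProcess_of_le le_rfl]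
    exact ((hS k).sub_const _).stronglyMeasurable

lemma integrable_valueProcess [IsFiniteMeasure P] (hS : Integrable (S n) P) (k : ℕ) :
    Integrable (valueProcess P 𝓕 S α n k) P := by
  rcases lt_or_ge k n with hk | hk
  · rw [valueProcess_of_lt hk]
    exact integrable_valueStep
  · rw [valueProcess_of_le hk]
    exact hS.sub (integrable_const _)

lemma valueProcess_pred_ae_eq [IsFiniteMeasure P] (hn : 1 ≤ n) (hα : 0 ≤ α n)
    (hS : Integrable (S n) P) :
    valueProcess P 𝓕 S α n (n - 1) =ᵐ[P] fun ω => P[S n|𝓕 (n - 1)] ω - α n := by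
  rw [valueProcess_of_lt (by omega), Nat.sub_add_cancel hn, valueProcess_of_le le_rfl]
  exact valueStep_sub_const (𝓕.le _) hα hS

lemma ae_eq_valueProcess [IsFiniteMeasure P] (hn : 1 ≤ n) (hα : 0 ≤ α n) (hS : Integrable (S n) P)
    {Vh : ℕ → Ω → ℝ} (hVlast : Vh (n - 1) =ᵐ[P] fun ω => (P[S n|𝓕 (n - 1)]) ω - α n)
    (hVrec : ∀ k, 1 ≤ k → k ≤ n - 1 →
      Vh (k - 1) =ᵐ[P] fun ω =>
        max ((P[Vh k|𝓕 (k - 1)]) ω)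
          ((P[fun ω' => max (Vh k ω') (S k ω') - α k|𝓕 (k - 1)]) ω))
    {k : ℕ} (hk : k ≤ n - 1) : Vh k =ᵐ[P] valueProcess P 𝓕 S α n k := by
  induction hk using Nat.decreasingInduction with
  | self => exact hVlast.trans (valueProcess_pred_ae_eq hn hα hS).symm
  | of_succ k hk ih =>
    have hrec := hVrec (k + 1) (by omega) hk
    rw [Nat.add_sub_cancel] at hrec
    rw [valueProcess_of_lt (by omega)]
    exact hrec.trans (valueStep_congr_ae ih)

namespace MemTCneg

variable {t : ℕ} {M : ℕ → Ω → ℝ}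

lemma condExp_sub_le (hM : MemTCneg 𝓕 P S α t n M) {k : ℕ} (htk : t ≤ k) (hkn : k < n)
    {X : Ω → ℝ} (hX : Integrable X P)
    (hXle : X ≤ᵐ[P] fun ω => max (M (k + 1) ω) (S (k + 1) ω)) :
    (fun ω => P[X|𝓕 k] ω - α (k + 1)) ≤ᵐ[P] M k := by
  obtain ⟨hloss, hloss_le⟩ := hM.2 (k + 1) (by omega) hkn
  rw [Nat.add_sub_cancel] at hloss_le
  exact condExp_sub_le_of_le_max hX (hM.1.2.1 _ (by omega) hkn) hloss (hM.1.2.2 k htk hkn)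
    hloss_le hXle

lemma valueStep_le [IsFiniteMeasure P] (hM : MemTCneg 𝓕 P S α t n M) {k : ℕ} (htk : t ≤ k)
    (hkn : k < n) (hS : Integrable (S (k + 1)) P) {V : Ω → ℝ} (hV : Integrable V P)
    (hVM : V ≤ᵐ[P] M (k + 1)) : valueStep P (𝓕 k) V (S (k + 1)) (α (k + 1)) ≤ᵐ[P] M k := by
  have hmax : (fun ω => max (V ω) (S (k + 1) ω)) ≤ᵐ[P]
      fun ω => max (M (k + 1) ω) (S (k + 1) ω) := by
    filter_upwards [hVM] with ω h using max_le_max h le_rfl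
  filter_upwards [condExp_mono (m := 𝓕 k) hV (hM.1.2.1 _ (by omega) hkn) hVM, hM.1.2.2 k htk hkn,
    condExp_sub_const (𝓕.le k) (hV.sup hS) (α (k + 1)),
    hM.condExp_sub_le htk hkn (hV.sup hS) hmax] with ω h₁ h₂ h₃ h₄
  exact max_le (h₁.trans h₂) (h₃ ▸ h₄)

end MemTCneg

lemma valueProcess_le_of_memTCneg [IsFiniteMeasure P] (hn : 1 ≤ n) (hα : 0 ≤ α n)
    (hS : ∀ k, Integrable (S k) P) {t : ℕ} {M : ℕ → Ω → ℝ} (hM : MemTCneg 𝓕 P S α t n M)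
    {k : ℕ} (hk : k ≤ n - 1) (htk : t ≤ k) : valueProcess P 𝓕 S α n k ≤ᵐ[P] M k := by
  induction hk using Nat.decreasingInduction with
  | self =>
    have hXle : S (n - 1 + 1) ≤ᵐ[P] fun ω => max (M (n - 1 + 1) ω) (S (n - 1 + 1) ω) :=
      ae_of_all _ fun ω => le_max_right _ _
    have h := hM.condExp_sub_le htk (by omega) (hS _) hXle
    rw [Nat.sub_add_cancel hn] at h
    exact (valueProcess_pred_ae_eq hn hα (hS n)).trans_le h
  | of_succ k hk ih =>
    rw [valueProcess_of_lt (by omega)]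
    exact hM.valueStep_le htk (by omega) (hS _) (integrable_valueProcess (hS n) _)
      (ih (by omega))

lemma hedgeProcess_self (t : ℕ) : hedgeProcess P 𝓕 S α n t t = valueProcess P 𝓕 S α n t := by
  rw [hedgeProcess, if_pos le_rfl]

lemma hedgeProcess_of_lt {t k : ℕ} (htk : t < k) :
    hedgeProcess P 𝓕 S α n t k =
      hedgeStep P (𝓕 (k - 1)) (valueProcess P 𝓕 S α n k) (S k) (α k) := by
  rw [hedgeProcess, if_neg htk.not_ge]

lemma valueProcess_le_hedgeProcess (hα : ∀ k, 1 ≤ k → k ≤ n → 0 ≤ α k) {t k : ℕ}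
    (htk : t ≤ k) (hkn : k ≤ n) : valueProcess P 𝓕 S α n k ≤ hedgeProcess P 𝓕 S α n t k := by
  rcases htk.lt_or_eq with htk | rfl
  · rw [hedgeProcess_of_lt htk]
    exact le_hedgeStep (hα k (by omega) hkn)
  · rw [hedgeProcess_self]

lemma memTCneg_hedgeProcess [IsFiniteMeasure P] (hS : Adapted 𝓕 S)
    (hSint : ∀ k, Integrable (S k) P) (hα : ∀ k, 1 ≤ k → k ≤ n → 0 ≤ α k) {t : ℕ} :
    MemTCneg 𝓕 P S α t n (hedgeProcess P 𝓕 S α n t) := by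
  have hV := integrable_valueProcess (𝓕 := 𝓕) (α := α) (hSint n)
  refine ⟨⟨fun k htk hkn => ?_, fun k htk hkn => ?_, fun k htk hkn => ?_⟩, fun k htk hkn => ?_⟩
  · rcases htk.lt_or_eq with htk | rfl
    · rw [hedgeProcess_of_lt htk]
      exact stronglyMeasurable_hedgeStep (𝓕.mono (Nat.sub_le k 1))
        (stronglyMeasurable_valueProcess hS hkn) (hS k).stronglyMeasurable
    · rw [hedgeProcess_self]
      exact stronglyMeasurable_valueProcess hS hkn
  · rcases htk.lt_or_eq with htk | rfl
    · rw [hedgeProcess_of_lt htk]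
      exact integrable_hedgeStep (𝓕.le _) (hα k (by omega) hkn) (hV k) (hSint k)
    · rw [hedgeProcess_self]
      exact hV _
  · have hstep := condExp_hedgeStep (𝓕.le k) (hα (k + 1) (by omega) hkn) (hV (k + 1))
      (hSint (k + 1))
    rw [hedgeProcess_of_lt (by omega), Nat.add_sub_cancel]
    rw [← valueProcess_of_lt hkn] at hstep
    exact hstep.trans_le (ae_of_all _ (valueProcess_le_hedgeProcess hα htk hkn.le))
  · rw [hedgeProcess_of_lt (by omega)]
    exact ⟨integrable_negPart_hedgeStep_sub (𝓕.le _) (hα k (by omega) hkn) (hV k) (hSint k),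
      condExp_negPart_hedgeStep_sub_le (𝓕.le _) (hα k (by omega) hkn) (hV k) (hSint k)⟩

end MultiStep

theorem stmt_10_general
    {Ω : Type*} {m0 : MeasurableSpace Ω} (P : Measure Ω) [IsProbabilityMeasure P]
    (𝓕 : Filtration ℕ m0) (n : ℕ) (hn : 1 ≤ n)
    (S : ℕ → Ω → ℝ) (hS : Adapted 𝓕 S) (hSint : ∀ t, Integrable (S t) P)
    (α : ℕ → ℝ) (hα : ∀ k, 1 ≤ k → k ≤ n → 0 < α k)
    (Vh : ℕ → Ω → ℝ)
    (hVlast : Vh (n - 1) =ᵐ[P] fun ω => (P[S n|𝓕 (n - 1)]) ω - α n)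
    (hVrec : ∀ k, 1 ≤ k → k ≤ n - 1 →
      Vh (k - 1) =ᵐ[P] fun ω =>
        max ((P[Vh k|𝓕 (k - 1)]) ω)
          ((P[fun ω' => max (Vh k ω') (S k ω') - α k|𝓕 (k - 1)]) ω)) :
    ∀ t, t ≤ n - 1 →
      IsEssInf P {f : Ω → ℝ | ∃ M : ℕ → Ω → ℝ,
        MemTCneg 𝓕 P S α t n M ∧ f = M t} (Vh t) := by
  intro t ht
  have hα₀ : ∀ k, 1 ≤ k → k ≤ n → 0 ≤ α k := fun k h₁ h₂ => (hα k h₁ h₂).le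
  have hαn := hα₀ n hn le_rfl
  have hVt := ae_eq_valueProcess hn hαn (hSint n) hVlast hVrec ht
  refine isEssInf_of_ae_eq_mem ?_
    ⟨_, memTCneg_hedgeProcess hS hSint hα₀, rfl⟩ ?_
  · rintro _ ⟨M, hM, rfl⟩
    exact hVt.trans_le (valueProcess_le_of_memTCneg hn hαn hSint hM ht le_rfl)
  · rw [hedgeProcess_self]
    exact hVt.symm

/-- Proposition 3.7(2): with `P = Q`, loss function `l(x) = x⁻` and `α_k > 0`, the
explicit process `V̂_{n-1} = E[S_n | F_{n-1}] - α_n`,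
`V̂_{k-1} = max(E[V̂_k | F_{k-1}], E[V̂_k ∨ S_k - α_k | F_{k-1}])` is, at every
date `t ∈ {0,…,n-1}`, an essential infimum of `{ M_t : (M_s)_{s=t}^n ∈ ℳ_{TC,t} }`. -/
theorem stmt_10
    {Ω : Type*} {m0 : MeasurableSpace Ω} (P : Measure Ω) [IsProbabilityMeasure P]
    (𝓕 : Filtration ℕ m0) (n : ℕ) (hn : 1 ≤ n)
    (htriv : ∀ s : Set Ω, MeasurableSet[𝓕 0] s → P s = 0 ∨ P s = 1)
    (S : ℕ → Ω → ℝ) (hS : Adapted 𝓕 S) (hSint : ∀ t, Integrable (S t) P)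
    (α : ℕ → ℝ) (hα : ∀ k, 1 ≤ k → k ≤ n → 0 < α k)
    (Vh : ℕ → Ω → ℝ)
    (hVint : ∀ k, k ≤ n - 1 → Integrable (Vh k) P)
    (hVlast : Vh (n - 1) =ᵐ[P] fun ω => (P[S n|𝓕 (n - 1)]) ω - α n)
    (hVrec : ∀ k, 1 ≤ k → k ≤ n - 1 →
      Vh (k - 1) =ᵐ[P] fun ω =>
        max ((P[Vh k|𝓕 (k - 1)]) ω)
          ((P[fun ω' => max (Vh k ω') (S k ω') - α k|𝓕 (k - 1)]) ω)) :
    ∀ t, t ≤ n - 1 →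
      IsEssInf P {f : Ω → ℝ | ∃ M : ℕ → Ω → ℝ,
        MemTCneg 𝓕 P S α t n M ∧ f = M t} (Vh t) :=
  stmt_10_general P 𝓕 n hn S hS hSint α hα Vh hVlast hVrec
end

section
/- Let p > 0 and l(x) = e^{−px} − 1. Let Z = dQ/dP and suppose E^P[ Z |log Z| ] < ∞, and let α > −1 (so that α > lim_{x→+∞} l(x) = −1). Let S_1 be Q-integrable. Then the infimum of E^Q[M] over all Q-integrable random variables M such that e^{−p(M − S_1)} is P-integrable and E^P[ e^{−p(M−S_1)} − 1 ] ≤ α equals E^Q[S_1] − (1/p) log(1 + α) − (1/p) E^P[ Z log Z ]. -/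
/-!
Write `Y = -p (M - S₁)`. The Gibbs variational inequality
`E^Q[Y] ≤ log E^P[e^Y] + E^P[Z log Z]`, obtained by integrating Young's inequality
`z y ≤ t e^y + z log z - z log t - z` with `t = 1 / E^P[e^Y]`, turns the constraint
`E^P[e^Y] ≤ 1 + α` into the lower bound for `E^Q[M]`. Young's inequality is an equality when
`t e^y = z`, so `M = S₁ - (log Z + log (1 + α)) / p`, for which `e^Y = (1 + α) Z`, attains it.
-/

open MeasureTheory Real

lemma mul_le_mul_exp_add_mul_log_sub {z t : ℝ} (hz : 0 < z) (ht : 0 < t) (y : ℝ) :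
    z * y ≤ t * exp y + z * log z - z * log t - z := by
  have hexp : z * exp (y - log z + log t) = t * exp y := by
    rw [exp_add, exp_sub, exp_log hz, exp_log ht]
    field_simp
  nlinarith [mul_le_mul_of_nonneg_left (add_one_le_exp (y - log z + log t)) hz.le]

section Density

variable {Ω : Type*} {m0 : MeasurableSpace Ω} {P Q : Measure Ω} {Z : Ω → ℝ}

lemma integral_eq_integral_density_mul (hZmeas : Measurable Z) (hZnonneg : ∀ᵐ ω ∂P, 0 ≤ Z ω)
    (hZ : P.withDensity (fun ω => ENNReal.ofReal (Z ω)) = Q) (f : Ω → ℝ) :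
    ∫ ω, f ω ∂Q = ∫ ω, Z ω * f ω ∂P := by
  rw [← hZ, integral_withDensity_eq_integral_toReal_smul hZmeas.ennreal_ofReal
    (ae_of_all _ fun _ => ENNReal.ofReal_lt_top)]
  refine integral_congr_ae ?_
  filter_upwards [hZnonneg] with ω hω
  simp [ENNReal.toReal_ofReal hω]

lemma integrable_iff_integrable_density_mul (hZmeas : Measurable Z)
    (hZnonneg : ∀ᵐ ω ∂P, 0 ≤ Z ω) (hZ : P.withDensity (fun ω => ENNReal.ofReal (Z ω)) = Q)
    (f : Ω → ℝ) :
    Integrable f Q ↔ Integrable (fun ω => Z ω * f ω) P := by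
  rw [← hZ, integrable_withDensity_iff_integrable_smul' hZmeas.ennreal_ofReal
    (ae_of_all _ fun _ => ENNReal.ofReal_lt_top)]
  refine integrable_congr ?_
  filter_upwards [hZnonneg] with ω hω
  simp [ENNReal.toReal_ofReal hω]

variable [IsProbabilityMeasure Q]

lemma integrable_density (hZmeas : Measurable Z) (hZnonneg : ∀ᵐ ω ∂P, 0 ≤ Z ω)
    (hZ : P.withDensity (fun ω => ENNReal.ofReal (Z ω)) = Q) : Integrable Z P := by
  simpa using (integrable_iff_integrable_density_mul hZmeas hZnonneg hZ _).mp
    (integrable_const (1 : ℝ))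

lemma integral_density_eq_one (hZmeas : Measurable Z) (hZnonneg : ∀ᵐ ω ∂P, 0 ≤ Z ω)
    (hZ : P.withDensity (fun ω => ENNReal.ofReal (Z ω)) = Q) : ∫ ω, Z ω ∂P = 1 := by
  simpa using (integral_eq_integral_density_mul hZmeas hZnonneg hZ (fun _ => (1 : ℝ))).symm

theorem integral_le_log_integral_exp_add_integral_mul_log (hZmeas : Measurable Z)
    (hZpos : ∀ᵐ ω ∂P, 0 < Z ω) (hZ : P.withDensity (fun ω => ENNReal.ofReal (Z ω)) = Q)
    (hZlog : Integrable (fun ω => Z ω * log (Z ω)) P) {Y : Ω → ℝ} (hY : Integrable Y Q)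
    (hexpY : Integrable (fun ω => exp (Y ω)) P) :
    ∫ ω, Y ω ∂Q ≤ log (∫ ω, exp (Y ω) ∂P) + ∫ ω, Z ω * log (Z ω) ∂P := by
  have hZnonneg : ∀ᵐ ω ∂P, 0 ≤ Z ω := hZpos.mono fun _ h => h.le
  have hZint := integrable_density hZmeas hZnonneg hZ
  have hZone := integral_density_eq_one hZmeas hZnonneg hZ
  have : NeZero P := ⟨by rintro rfl; simp at hZone⟩
  set E := ∫ ω, exp (Y ω) ∂P
  have hE : 0 < E := integral_exp_pos hexpY
  have hyoung : ∀ᵐ ω ∂P, Z ω * Y ω ≤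
      E⁻¹ * exp (Y ω) + Z ω * log (Z ω) - Z ω * log E⁻¹ - Z ω := by
    filter_upwards [hZpos] with ω hω
    exact mul_le_mul_exp_add_mul_log_sub hω (inv_pos.mpr hE) (Y ω)
  have hA : Integrable (fun ω => E⁻¹ * exp (Y ω)) P := hexpY.const_mul _
  have hB : Integrable (fun ω => Z ω * log E⁻¹) P := hZint.mul_const _
  have hAB : Integrable (fun ω => E⁻¹ * exp (Y ω) + Z ω * log (Z ω)) P := hA.add hZlog
  have hABC : Integrable (fun ω => E⁻¹ * exp (Y ω) + Z ω * log (Z ω) - Z ω * log E⁻¹) P :=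
    hAB.sub hB
  have hrhs : ∫ ω, (E⁻¹ * exp (Y ω) + Z ω * log (Z ω) - Z ω * log E⁻¹ - Z ω) ∂P
      = log E + ∫ ω, Z ω * log (Z ω) ∂P := by
    rw [integral_sub hABC hZint, integral_sub hAB hB,
      integral_add hA hZlog, integral_const_mul, integral_mul_const, hZone,
      inv_mul_cancel₀ hE.ne', log_inv]
    ring
  calc ∫ ω, Y ω ∂Q = ∫ ω, Z ω * Y ω ∂P := integral_eq_integral_density_mul hZmeas hZnonneg hZ Y
    _ ≤ _ := integral_mono_ae ((integrable_iff_integrable_density_mul hZmeas hZnonneg hZ Y).mp hY)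
        (hABC.sub hZint) hyoung
    _ = _ := hrhs

variable {c p : ℝ} {S₁ : Ω → ℝ}

lemma le_integral_of_integral_exp_le [NeZero P] (hZmeas : Measurable Z)
    (hZpos : ∀ᵐ ω ∂P, 0 < Z ω) (hZ : P.withDensity (fun ω => ENNReal.ofReal (Z ω)) = Q)
    (hZlog : Integrable (fun ω => Z ω * log (Z ω)) P) (hp : 0 < p) (hS₁ : Integrable S₁ Q)
    {M : Ω → ℝ} (hM : Integrable M Q) (hexp : Integrable (fun ω => exp (-p * (M ω - S₁ ω))) P)
    (hcon : ∫ ω, exp (-p * (M ω - S₁ ω)) ∂P ≤ c) :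
    (∫ ω, S₁ ω ∂Q) - (1 / p) * log c - (1 / p) * ∫ ω, Z ω * log (Z ω) ∂P ≤ ∫ ω, M ω ∂Q := by
  have hgibbs := integral_le_log_integral_exp_add_integral_mul_log hZmeas hZpos hZ hZlog
    (Y := fun ω => -p * (M ω - S₁ ω)) ((hM.sub hS₁).const_mul (-p)) hexp
  rw [integral_const_mul, integral_sub hM hS₁] at hgibbs
  have hlog := log_le_log (integral_exp_pos hexp) hcon
  calc _ = (∫ ω, S₁ ω ∂Q) - (log c + ∫ ω, Z ω * log (Z ω) ∂P) / p := by ring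
    _ ≤ (∫ ω, S₁ ω ∂Q) - (-p * ((∫ ω, M ω ∂Q) - ∫ ω, S₁ ω ∂Q)) / p := by gcongr; linarith
    _ = ∫ ω, M ω ∂Q := by field_simp; ring

lemma exists_integral_exp_eq_and_integral_eq (hZmeas : Measurable Z)
    (hZpos : ∀ᵐ ω ∂P, 0 < Z ω) (hZ : P.withDensity (fun ω => ENNReal.ofReal (Z ω)) = Q)
    (hZlog : Integrable (fun ω => Z ω * log (Z ω)) P) (hp : 0 < p) (hc : 0 < c)
    (hS₁ : Integrable S₁ Q) :
    ∃ M : Ω → ℝ, Integrable M Q ∧ Integrable (fun ω => exp (-p * (M ω - S₁ ω))) P ∧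
      ∫ ω, exp (-p * (M ω - S₁ ω)) ∂P = c ∧
      ∫ ω, M ω ∂Q = (∫ ω, S₁ ω ∂Q) - (1 / p) * log c - (1 / p) * ∫ ω, Z ω * log (Z ω) ∂P := by
  have hZnonneg : ∀ᵐ ω ∂P, 0 ≤ Z ω := hZpos.mono fun _ h => h.le
  have hlogQ : Integrable (fun ω => log (Z ω)) Q :=
    (integrable_iff_integrable_density_mul hZmeas hZnonneg hZ _).mpr hZlog
  set M₀ : Ω → ℝ := fun ω => S₁ ω - (log (Z ω) + log c) / p
  have hexp_eq : (fun ω => exp (-p * (M₀ ω - S₁ ω))) =ᵐ[P] fun ω => c * Z ω := by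
    filter_upwards [hZpos] with ω hω
    rw [show -p * (M₀ ω - S₁ ω) = log (Z ω) + log c by simp only [M₀]; field_simp; ring,
      exp_add, exp_log hω, exp_log hc, mul_comm]
  have hshift : Integrable (fun ω => (log (Z ω) + log c) / p) Q :=
    (hlogQ.add (integrable_const _)).div_const p
  refine ⟨M₀, hS₁.sub hshift,
    ((integrable_density hZmeas hZnonneg hZ).const_mul c).congr hexp_eq.symm, ?_, ?_⟩
  · rw [integral_congr_ae hexp_eq, integral_const_mul,
      integral_density_eq_one hZmeas hZnonneg hZ, mul_one]
  · change ∫ ω, (S₁ ω - (log (Z ω) + log c) / p) ∂Q = _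
    rw [integral_sub hS₁ hshift, integral_div,
      integral_add hlogQ (integrable_const _), integral_const, probReal_univ,
      integral_eq_integral_density_mul hZmeas hZnonneg hZ (fun ω => log (Z ω))]
    simp only [smul_eq_mul, one_mul]
    ring

end Density

theorem stmt_12_general
    {Ω : Type*} {m0 : MeasurableSpace Ω} (P Q : Measure Ω)
    [IsProbabilityMeasure P] [IsProbabilityMeasure Q]
    (Z : Ω → ℝ) (hZmeas : Measurable Z) (hZpos : ∀ᵐ ω ∂P, 0 < Z ω)
    (hZ : P.withDensity (fun ω => ENNReal.ofReal (Z ω)) = Q)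
    (hent : Integrable (fun ω => Z ω * |Real.log (Z ω)|) P)
    (p : ℝ) (hp : 0 < p) (α : ℝ) (hα : -1 < α)
    (S₁ : Ω → ℝ) (hS₁ : Integrable S₁ Q) :
    sInf {x : ℝ | ∃ M : Ω → ℝ, Integrable M Q ∧
        Integrable (fun ω => Real.exp (-p * (M ω - S₁ ω))) P ∧
        (∫ ω, (Real.exp (-p * (M ω - S₁ ω)) - 1) ∂P) ≤ α ∧
        x = ∫ ω, M ω ∂Q}
      = (∫ ω, S₁ ω ∂Q) - (1 / p) * Real.log (1 + α)
          - (1 / p) * ∫ ω, Z ω * Real.log (Z ω) ∂P := by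
  have hZlog : Integrable (fun ω => Z ω * log (Z ω)) P := by
    refine hent.mono' (by fun_prop) ?_
    filter_upwards [hZpos] with ω hω
    rw [norm_mul, Real.norm_of_nonneg hω.le, Real.norm_eq_abs]
  have hloss : ∀ f : Ω → ℝ, Integrable f P → ∫ ω, (f ω - 1) ∂P = ∫ ω, f ω ∂P - 1 := by
    intro f hf
    simp [integral_sub hf (integrable_const 1)]
  obtain ⟨M₀, hM₀, hexp₀, hcon₀, hM₀_eq⟩ := exists_integral_exp_eq_and_integral_eq hZmeas hZpos hZ
    hZlog hp (by linarith : 0 < 1 + α) hS₁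
  refine IsLeast.csInf_eq ⟨⟨M₀, hM₀, hexp₀, by linarith [hloss _ hexp₀], hM₀_eq.symm⟩, ?_⟩
  rintro x ⟨M, hM, hexp, hcon, rfl⟩
  exact le_integral_of_integral_exp_le hZmeas hZpos hZ hZlog hp hS₁ hM hexp
    (by linarith [hloss _ hexp])

/-- Exponential-loss case with one constraint: with `l(x) = e^{-px} - 1`,
`Z = dQ/dP` with finite relative entropy, and `α > -1`, the minimal cost
`inf { E^Q[M] : E^P[e^{-p(M-S₁)} - 1] ≤ α }` equals
`E^Q[S₁] - (1/p) log(1+α) - (1/p) E^P[Z log Z]`. -/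
theorem stmt_12
    {Ω : Type*} {m0 : MeasurableSpace Ω} (P Q : Measure Ω)
    [IsProbabilityMeasure P] [IsProbabilityMeasure Q]
    (hPQ : P ≪ Q) (hQP : Q ≪ P)
    (Z : Ω → ℝ) (hZmeas : Measurable Z) (hZpos : ∀ᵐ ω ∂P, 0 < Z ω)
    (hZ : P.withDensity (fun ω => ENNReal.ofReal (Z ω)) = Q)
    (hent : Integrable (fun ω => Z ω * |Real.log (Z ω)|) P)
    (p : ℝ) (hp : 0 < p) (α : ℝ) (hα : -1 < α)
    (S₁ : Ω → ℝ) (hS₁ : Integrable S₁ Q) :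
    sInf {x : ℝ | ∃ M : Ω → ℝ, Integrable M Q ∧
        Integrable (fun ω => Real.exp (-p * (M ω - S₁ ω))) P ∧
        (∫ ω, (Real.exp (-p * (M ω - S₁ ω)) - 1) ∂P) ≤ α ∧
        x = ∫ ω, M ω ∂Q}
      = (∫ ω, S₁ ω ∂Q) - (1 / p) * Real.log (1 + α)
          - (1 / p) * ∫ ω, Z ω * Real.log (Z ω) ∂P :=
  stmt_12_general (m0 := m0) P Q Z hZmeas hZpos hZ hent p hp α hα S₁ hS₁
end

section
/- Assume P = Q, n = 2 and the loss function l(x) = (−x)^+. Let S_1, S_2 be integrable with S_1 ℱ_1-measurable, let T := E[S_2 | ℱ_1], and let α_1, α_2 ≥ 0. Then: (i) V_0^{EU} := inf{ E[M] : M ℱ_1-measurable integrable, E[(S_1 − M)^+] ≤ α_1, E[(T − M)^+] ≤ α_2 } = max( E[S_1] − α_1, E[S_2] − α_2, E[S_1 ∨ T] − α_1 − α_2 ); (ii) V_0^{TC} := inf{ E[M] : M ℱ_1-measurable integrable, E[(S_1 − M)^+] ≤ α_1, (T − M)^+ ≤ α_2 a.s. } = max( E[S_2] − α_2, E[ S_1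 ∨ (T − α_2) ] − α_1 ); (iii) V_0^{LB} := inf{ E[M] : M ℱ_1-measurable integrable, E[ max( (S_1 − M)^+ − α_1, (T − M)^+ − α_2 ) ] ≤ 0 } = E[ max( S_1 − α_1, T − α_2 ) ]. -/
open MeasureTheory

/-!
Write `X = S₁` and let `Y` be any `ℱ₁`-measurable integrable function in place of `T` (with `E[Y]`
in place of `E[S₂] = E[T]`). Each infimum is attained. Lower bounds come from integrating pointwise
inequalities for an admissible `N`, e.g. `max X Y - N ≤ (X - N)⁺ + (Y - N)⁺` for `V₀^EU` and
`max X (Y - α₂) - N ≤ (X - N)⁺` when `Y - α₂ ≤ N` for `V₀^TC`. The minimisers are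
`max (X - α₁) (Y - α₂)` for `V₀^LB`, and for the other two `max X Y - s (X - Y)⁺ - t (Y - X)⁺ - e`
(with `Y - α₂` for `Y` and `t = e = 0` for `V₀^TC`), where `s, t ∈ [0, 1]` and `e ≥ 0` are chosen
to use up the tolerances.
-/

lemma exists_mem_Icc_mul_eq_min {a L : ℝ} (ha : 0 ≤ a) (hL : 0 ≤ L) :
    ∃ s ∈ Set.Icc (0 : ℝ) 1, s * L = min a L := by
  rcases hL.eq_or_lt with rfl | hL
  · exact ⟨0, ⟨le_rfl, zero_le_one⟩, by simp [ha]⟩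
  · exact ⟨min a L / L, ⟨by positivity, (div_le_one hL).2 (min_le_right _ _)⟩,
      div_mul_cancel₀ _ hL.ne'⟩

lemma max_eq_add_posPart_sub (a b : ℝ) : max a b = b + max (a - b) 0 := by
  rw [← sub_self b, max_sub_sub_right]; ring

lemma min_add_posPart_sub (a b : ℝ) : min a b + max (a - b) 0 = a := by
  rcases le_total a b with h | h <;> simp [h]

lemma max_max_sub_eq_sub_min (c a b A B : ℝ) :
    max (max (c - B - a) (c - A - b)) (c - a - b)
      = c - min a A - min b B - min (max (a - A) 0) (max (b - B) 0) := by
  rcases le_total a A with h | h <;> rcases le_total b B with h' | h' <;>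
    simp only [min_def, max_def] <;> split_ifs <;> linarith

lemma max_sub_le_posPart_sub_add_posPart_sub (a b n : ℝ) :
    max a b - n ≤ max (a - n) 0 + max (b - n) 0 := by
  rw [← max_sub_sub_right]
  exact max_le (by linarith [le_max_left (a - n) 0, le_max_right (b - n) 0])
    (by linarith [le_max_right (a - n) 0, le_max_left (b - n) 0])

lemma max_sub_le_posPart_sub {a b n : ℝ} (h : b ≤ n) : max a b - n ≤ max (a - n) 0 := by
  rw [← max_sub_sub_right]
  exact max_le_max le_rfl (sub_nonpos.2 h)

lemma max_sub_sub_sub_le (a b n α β : ℝ) :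
    max (a - α) (b - β) - n ≤ max (max (a - n) 0 - α) (max (b - n) 0 - β) := by
  rw [← max_sub_sub_right]
  exact max_le_max (by linarith [le_max_left (a - n) 0]) (by linarith [le_max_left (b - n) 0])

section RelaxedMax

variable {Ω : Type*}

noncomputable def relaxedMax (X Y : Ω → ℝ) (s t e : ℝ) (ω : Ω) : ℝ :=
  max (X ω) (Y ω) - s * max (X ω - Y ω) 0 - t * max (Y ω - X ω) 0 - e

lemma relaxedMax_comm (X Y : Ω → ℝ) (s t e : ℝ) :
    relaxedMax X Y s t e = relaxedMax Y X t s e := by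
  ext ω; simp only [relaxedMax, max_comm (X ω)]; ring

lemma posPart_sub_relaxedMax_le {X Y : Ω → ℝ} {s t e : ℝ} (hs : 0 ≤ s) (ht : t ≤ 1)
    (he : 0 ≤ e) (ω : Ω) :
    max (X ω - relaxedMax X Y s t e ω) 0 ≤ s * max (X ω - Y ω) 0 + e := by
  have hYX : 0 ≤ max (Y ω - X ω) 0 := le_max_right _ _
  refine max_le ?_ (by positivity)
  rw [relaxedMax, max_comm, max_eq_add_posPart_sub (Y ω) (X ω)]
  nlinarith

lemma MeasureTheory.StronglyMeasurable.relaxedMax {m : MeasurableSpace Ω} {X Y : Ω → ℝ}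
    (hX : StronglyMeasurable[m] X) (hY : StronglyMeasurable[m] Y) (s t e : ℝ) :
    StronglyMeasurable[m] (relaxedMax X Y s t e) :=
  ((((hX.sup hY).sub (((hX.sub hY).sup stronglyMeasurable_const).const_mul s)).sub
    (((hY.sub hX).sup stronglyMeasurable_const).const_mul t))).sub stronglyMeasurable_const

end RelaxedMax

section Integral

variable {Ω : Type*} {m0 : MeasurableSpace Ω} {P : Measure Ω} {X Y N : Ω → ℝ}

lemma integral_max_eq_integral_add_posPart (hX : Integrable X P) (hY : Integrable Y P) :
    ∫ ω, max (X ω) (Y ω) ∂P = (∫ ω, Y ω ∂P) + ∫ ω, max (X ω - Y ω) 0 ∂P := by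
  simp_rw [max_eq_add_posPart_sub (X _)]
  exact integral_add hY (hX.sub hY).pos_part

lemma integral_sub_le_of_ae_sub_le {f g : Ω → ℝ} (hf : Integrable f P) (hN : Integrable N P)
    (hg : Integrable g P) (h : ∀ᵐ ω ∂P, f ω - N ω ≤ g ω) :
    (∫ ω, f ω ∂P) - ∫ ω, N ω ∂P ≤ ∫ ω, g ω ∂P := by
  rw [← integral_sub hf hN]
  exact integral_mono_ae (hf.sub hN) hg h

lemma MeasureTheory.Integrable.relaxedMax [IsFiniteMeasure P] (hX : Integrable X P)
    (hY : Integrable Y P) (s t e : ℝ) : Integrable (relaxedMax X Y s t e) P :=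
  (((hX.sup hY).sub ((hX.sub hY).pos_part.const_mul s)).sub
    ((hY.sub hX).pos_part.const_mul t)).sub (integrable_const e)

variable [IsProbabilityMeasure P]

lemma integral_relaxedMax (hX : Integrable X P) (hY : Integrable Y P) (s t e : ℝ) :
    ∫ ω, relaxedMax X Y s t e ω ∂P = (∫ ω, max (X ω) (Y ω) ∂P)
      - s * (∫ ω, max (X ω - Y ω) 0 ∂P) - t * (∫ ω, max (Y ω - X ω) 0 ∂P) - e := by
  have hmax : Integrable (fun ω => max (X ω) (Y ω)) P := hX.sup hY
  have hXY : Integrable (fun ω => s * max (X ω - Y ω) 0) P := (hX.sub hY).pos_part.const_mul s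
  have hYX : Integrable (fun ω => t * max (Y ω - X ω) 0) P := (hY.sub hX).pos_part.const_mul t
  have hmax_sub : Integrable (fun ω => max (X ω) (Y ω) - s * max (X ω - Y ω) 0) P :=
    hmax.sub hXY
  have hmax_sub_sub : Integrable
      (fun ω => max (X ω) (Y ω) - s * max (X ω - Y ω) 0 - t * max (Y ω - X ω) 0) P :=
    hmax_sub.sub hYX
  simp only [relaxedMax]
  rw [integral_sub hmax_sub_sub (integrable_const e), integral_sub hmax_sub hYX,
    integral_sub hmax hXY, integral_const_mul, integral_const_mul]
  simp

lemma integral_posPart_sub_relaxedMax_le (hX : Integrable X P) (hY : Integrable Y P) {s t e : ℝ}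
    (hs : 0 ≤ s) (ht : t ≤ 1) (he : 0 ≤ e) :
    ∫ ω, max (X ω - relaxedMax X Y s t e ω) 0 ∂P ≤ s * (∫ ω, max (X ω - Y ω) 0 ∂P) + e := by
  have hXY : Integrable (fun ω => s * max (X ω - Y ω) 0) P := (hX.sub hY).pos_part.const_mul s
  calc ∫ ω, max (X ω - relaxedMax X Y s t e ω) 0 ∂P
      ≤ ∫ ω, s * max (X ω - Y ω) 0 + e ∂P :=
        integral_mono (hX.sub (hX.relaxedMax hY s t e)).pos_part (hXY.add (integrable_const e))
          (posPart_sub_relaxedMax_le hs ht he)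
    _ = s * (∫ ω, max (X ω - Y ω) 0 ∂P) + e := by
        rw [integral_add hXY (integrable_const e), integral_const_mul]
        simp

end Integral

section Capitals

variable {Ω : Type*} {m0 : MeasurableSpace Ω}

/- The sets whose infima are `V₀^EU`, `V₀^TC` and `V₀^LB`. -/

def capitalsEU (P : Measure Ω) (m : MeasurableSpace Ω) (X Y : Ω → ℝ) (α₁ α₂ : ℝ) : Set ℝ :=
  {x | ∃ M : Ω → ℝ, StronglyMeasurable[m] M ∧ Integrable M P ∧
    (∫ ω, max (X ω - M ω) 0 ∂P) ≤ α₁ ∧ (∫ ω, max (Y ω - M ω) 0 ∂P) ≤ α₂ ∧ x = ∫ ω, M ω ∂P}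

def capitalsTC (P : Measure Ω) (m : MeasurableSpace Ω) (X Y : Ω → ℝ) (α₁ α₂ : ℝ) : Set ℝ :=
  {x | ∃ M : Ω → ℝ, StronglyMeasurable[m] M ∧ Integrable M P ∧
    (∫ ω, max (X ω - M ω) 0 ∂P) ≤ α₁ ∧ (∀ᵐ ω ∂P, max (Y ω - M ω) 0 ≤ α₂) ∧ x = ∫ ω, M ω ∂P}

def capitalsLB (P : Measure Ω) (m : MeasurableSpace Ω) (X Y : Ω → ℝ) (α₁ α₂ : ℝ) : Set ℝ :=
  {x | ∃ M : Ω → ℝ, StronglyMeasurable[m] M ∧ Integrable M P ∧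
    (∫ ω, max (max (X ω - M ω) 0 - α₁) (max (Y ω - M ω) 0 - α₂) ∂P) ≤ 0 ∧
    x = ∫ ω, M ω ∂P}

variable {P : Measure Ω} [IsProbabilityMeasure P] {m : MeasurableSpace Ω} {X Y : Ω → ℝ}
  {α₁ α₂ : ℝ}

theorem isLeast_capitalsEU (hα₁ : 0 ≤ α₁) (hα₂ : 0 ≤ α₂) (hXm : StronglyMeasurable[m] X)
    (hYm : StronglyMeasurable[m] Y) (hX : Integrable X P) (hY : Integrable Y P) :
    IsLeast (capitalsEU P m X Y α₁ α₂) (max (max ((∫ ω, X ω ∂P) - α₁) ((∫ ω, Y ω ∂P) - α₂))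
      ((∫ ω, max (X ω) (Y ω) ∂P) - α₁ - α₂)) := by
  set A := ∫ ω, max (X ω - Y ω) 0 ∂P
  set B := ∫ ω, max (Y ω - X ω) 0 ∂P
  obtain ⟨s, ⟨hs₀, hs₁⟩, hsA⟩ :=
    exists_mem_Icc_mul_eq_min hα₁ (integral_nonneg fun ω => le_max_right (X ω - Y ω) 0)
  obtain ⟨t, ⟨ht₀, ht₁⟩, htB⟩ :=
    exists_mem_Icc_mul_eq_min hα₂ (integral_nonneg fun ω => le_max_right (Y ω - X ω) 0)
  -- `α₁` is spent on the excess of `X` over `Y`, `α₂` on that of `Y` over `X`, and what is left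
  -- of both budgets is spent as a constant.
  set e := min (max (α₁ - A) 0) (max (α₂ - B) 0)
  have he : 0 ≤ e := le_min (le_max_right _ _) (le_max_right _ _)
  refine ⟨⟨_, hXm.relaxedMax hYm s t e, hX.relaxedMax hY s t e, ?_, ?_, ?_⟩, ?_⟩
  · calc _ ≤ s * A + e := integral_posPart_sub_relaxedMax_le hX hY hs₀ ht₁ he
      _ ≤ α₁ := by linarith [min_le_left (max (α₁ - A) 0) (max (α₂ - B) 0),
        min_add_posPart_sub α₁ A]
  · rw [relaxedMax_comm]
    calc _ ≤ t * B + e := integral_posPart_sub_relaxedMax_le hY hX ht₀ hs₁ he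
      _ ≤ α₂ := by linarith [min_le_right (max (α₁ - A) 0) (max (α₂ - B) 0),
        min_add_posPart_sub α₂ B]
  · have hXB := integral_max_eq_integral_add_posPart hY hX
    simp_rw [max_comm (Y _)] at hXB
    have hYA := integral_max_eq_integral_add_posPart hX hY
    rw [integral_relaxedMax hX hY, hsA, htB, ← max_max_sub_eq_sub_min]
    congr 2 <;> linarith
  · rintro _ ⟨N, -, hN, h₁, h₂, rfl⟩
    have hXN : Integrable (fun ω => max (X ω - N ω) 0) P := (hX.sub hN).pos_part
    have hYN : Integrable (fun ω => max (Y ω - N ω) 0) P := (hY.sub hN).pos_part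
    have hX₁ := integral_sub_le_of_ae_sub_le hX hN hXN
      (ae_of_all _ fun ω => le_max_left (X ω - N ω) 0)
    have hY₂ := integral_sub_le_of_ae_sub_le hY hN hYN
      (ae_of_all _ fun ω => le_max_left (Y ω - N ω) 0)
    have hXY₁₂ := integral_sub_le_of_ae_sub_le (f := fun ω => max (X ω) (Y ω))
      (g := fun ω => max (X ω - N ω) 0 + max (Y ω - N ω) 0) (hX.sup hY) hN (hXN.add hYN)
      (ae_of_all _ fun ω => max_sub_le_posPart_sub_add_posPart_sub _ _ _)
    rw [integral_add hXN hYN] at hXY₁₂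
    exact max_le (max_le (by linarith) (by linarith)) (by linarith)

theorem isLeast_capitalsTC (hα₁ : 0 ≤ α₁) (hα₂ : 0 ≤ α₂) (hXm : StronglyMeasurable[m] X)
    (hYm : StronglyMeasurable[m] Y) (hX : Integrable X P) (hY : Integrable Y P) :
    IsLeast (capitalsTC P m X Y α₁ α₂)
      (max ((∫ ω, Y ω ∂P) - α₂) ((∫ ω, max (X ω) (Y ω - α₂) ∂P) - α₁)) := by
  have hZm : StronglyMeasurable[m] (fun ω => Y ω - α₂) := hYm.sub stronglyMeasurable_const
  have hZ : Integrable (fun ω => Y ω - α₂) P := hY.sub (integrable_const α₂)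
  have hEZ : ∫ ω, Y ω - α₂ ∂P = (∫ ω, Y ω ∂P) - α₂ := by
    rw [integral_sub hY (integrable_const α₂)]; simp
  set A := ∫ ω, max (X ω - (Y ω - α₂)) 0 ∂P
  obtain ⟨s, ⟨hs₀, hs₁⟩, hsA⟩ :=
    exists_mem_Icc_mul_eq_min hα₁ (integral_nonneg fun ω => le_max_right (X ω - (Y ω - α₂)) 0)
  refine ⟨⟨_, hXm.relaxedMax hZm s 0 0, hX.relaxedMax hZ s 0 0, ?_, ?_, ?_⟩, ?_⟩
  · calc _ ≤ s * A + 0 := integral_posPart_sub_relaxedMax_le hX hZ hs₀ zero_le_one le_rfl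
      _ ≤ α₁ := by rw [add_zero, hsA]; exact min_le_left _ _
  · refine ae_of_all _ fun ω => max_le ?_ hα₂
    have hZM := posPart_sub_relaxedMax_le (X := fun ω => Y ω - α₂) (Y := X) le_rfl hs₁ le_rfl ω
    rw [← relaxedMax_comm] at hZM
    linarith [le_max_left (Y ω - α₂ - relaxedMax X (fun ω => Y ω - α₂) s 0 0 ω) 0]
  · have hXZ := integral_max_eq_integral_add_posPart hX hZ
    rw [integral_relaxedMax hX hZ, hsA, ← hEZ, hXZ, zero_mul, sub_zero, sub_zero,
      ← max_sub_sub_left, add_sub_cancel_right, max_comm]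
  · rintro _ ⟨N, -, hN, h₁, h₂, rfl⟩
    have hZN : ∀ᵐ ω ∂P, Y ω - α₂ ≤ N ω := h₂.mono fun ω h => by
      linarith [le_max_left (Y ω - N ω) 0]
    have hZ₂ := integral_mono_ae hZ hN hZN
    have hXZ₁ := integral_sub_le_of_ae_sub_le (f := fun ω => max (X ω) (Y ω - α₂))
      (g := fun ω => max (X ω - N ω) 0) (hX.sup hZ) hN (hX.sub hN).pos_part
      (hZN.mono fun _ => max_sub_le_posPart_sub)
    exact max_le (by linarith) (by linarith)

theorem isLeast_capitalsLB (hα₁ : 0 ≤ α₁) (hα₂ : 0 ≤ α₂) (hXm : StronglyMeasurable[m] X)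
    (hYm : StronglyMeasurable[m] Y) (hX : Integrable X P) (hY : Integrable Y P) :
    IsLeast (capitalsLB P m X Y α₁ α₂) (∫ ω, max (X ω - α₁) (Y ω - α₂) ∂P) := by
  have hM : Integrable (fun ω => max (X ω - α₁) (Y ω - α₂)) P :=
    (hX.sub (integrable_const α₁)).sup (hY.sub (integrable_const α₂))
  refine ⟨⟨fun ω => max (X ω - α₁) (Y ω - α₂),
    (hXm.sub stronglyMeasurable_const).sup (hYm.sub stronglyMeasurable_const), hM,
    integral_nonpos fun ω => ?_, rfl⟩, ?_⟩
  · have hXM := le_max_left (X ω - α₁) (Y ω - α₂)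
    have hYM := le_max_right (X ω - α₁) (Y ω - α₂)
    exact max_le (sub_nonpos.2 (max_le (by linarith) hα₁))
      (sub_nonpos.2 (max_le (by linarith) hα₂))
  · rintro _ ⟨N, -, hN, h, rfl⟩
    have hMN := integral_sub_le_of_ae_sub_le
      (g := fun ω => max (max (X ω - N ω) 0 - α₁) (max (Y ω - N ω) 0 - α₂)) hM hN
      (((hX.sub hN).pos_part.sub (integrable_const α₁)).sup
        ((hY.sub hN).pos_part.sub (integrable_const α₂)))
      (ae_of_all _ fun ω => max_sub_sub_sub_le _ _ _ _ _)
    linarith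

end Capitals

theorem stmt_13_general
    {Ω : Type*} {m0 : MeasurableSpace Ω} (P : Measure Ω) [IsProbabilityMeasure P]
    (m1 : MeasurableSpace Ω) (hm1 : m1 ≤ m0)
    (S₁ S₂ : Ω → ℝ) (hS₁meas : StronglyMeasurable[m1] S₁)
    (hS₁ : Integrable S₁ P)
    (α₁ α₂ : ℝ) (hα₁ : 0 ≤ α₁) (hα₂ : 0 ≤ α₂) :
    (sInf {x : ℝ | ∃ M : Ω → ℝ, StronglyMeasurable[m1] M ∧ Integrable M P ∧
        (∫ ω, max (S₁ ω - M ω) 0 ∂P) ≤ α₁ ∧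
        (∫ ω, max ((P[S₂|m1]) ω - M ω) 0 ∂P) ≤ α₂ ∧
        x = ∫ ω, M ω ∂P}
      = max (max ((∫ ω, S₁ ω ∂P) - α₁) ((∫ ω, S₂ ω ∂P) - α₂))
          ((∫ ω, max (S₁ ω) ((P[S₂|m1]) ω) ∂P) - α₁ - α₂))
    ∧
    (sInf {x : ℝ | ∃ M : Ω → ℝ, StronglyMeasurable[m1] M ∧ Integrable M P ∧
        (∫ ω, max (S₁ ω - M ω) 0 ∂P) ≤ α₁ ∧
        (∀ᵐ ω ∂P, max ((P[S₂|m1]) ω - M ω) 0 ≤ α₂) ∧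
        x = ∫ ω, M ω ∂P}
      = max ((∫ ω, S₂ ω ∂P) - α₂)
          ((∫ ω, max (S₁ ω) ((P[S₂|m1]) ω - α₂) ∂P) - α₁))
    ∧
    (sInf {x : ℝ | ∃ M : Ω → ℝ, StronglyMeasurable[m1] M ∧ Integrable M P ∧
        (∫ ω, max (max (S₁ ω - M ω) 0 - α₁) (max ((P[S₂|m1]) ω - M ω) 0 - α₂) ∂P) ≤ 0 ∧
        x = ∫ ω, M ω ∂P}
      = ∫ ω, max (S₁ ω - α₁) ((P[S₂|m1]) ω - α₂) ∂P) := by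
  have hT : StronglyMeasurable[m1] (P[S₂|m1]) := stronglyMeasurable_condExp
  have hTi : Integrable (P[S₂|m1]) P := integrable_condExp
  rw [← integral_condExp hm1 (f := S₂)]
  exact ⟨(isLeast_capitalsEU hα₁ hα₂ hS₁meas hT hS₁ hTi).csInf_eq,
    (isLeast_capitalsTC hα₁ hα₂ hS₁meas hT hS₁ hTi).csInf_eq,
    (isLeast_capitalsLB hα₁ hα₂ hS₁meas hT hS₁ hTi).csInf_eq⟩

/-- The two-date risk-neutral example with loss `l(x) = (-x)⁺`: explicit values of
`V₀^EU`, `V₀^TC` and `V₀^LB`, with `T = E[S₂ | F₁]`. -/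
theorem stmt_13
    {Ω : Type*} {m0 : MeasurableSpace Ω} (P : Measure Ω) [IsProbabilityMeasure P]
    (m1 : MeasurableSpace Ω) (hm1 : m1 ≤ m0)
    (S₁ S₂ : Ω → ℝ) (hS₁meas : StronglyMeasurable[m1] S₁)
    (hS₁ : Integrable S₁ P) (hS₂ : Integrable S₂ P)
    (α₁ α₂ : ℝ) (hα₁ : 0 ≤ α₁) (hα₂ : 0 ≤ α₂) :
    (sInf {x : ℝ | ∃ M : Ω → ℝ, StronglyMeasurable[m1] M ∧ Integrable M P ∧
        (∫ ω, max (S₁ ω - M ω) 0 ∂P) ≤ α₁ ∧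
        (∫ ω, max ((P[S₂|m1]) ω - M ω) 0 ∂P) ≤ α₂ ∧
        x = ∫ ω, M ω ∂P}
      = max (max ((∫ ω, S₁ ω ∂P) - α₁) ((∫ ω, S₂ ω ∂P) - α₂))
          ((∫ ω, max (S₁ ω) ((P[S₂|m1]) ω) ∂P) - α₁ - α₂))
    ∧
    (sInf {x : ℝ | ∃ M : Ω → ℝ, StronglyMeasurable[m1] M ∧ Integrable M P ∧
        (∫ ω, max (S₁ ω - M ω) 0 ∂P) ≤ α₁ ∧
        (∀ᵐ ω ∂P, max ((P[S₂|m1]) ω - M ω) 0 ≤ α₂) ∧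
        x = ∫ ω, M ω ∂P}
      = max ((∫ ω, S₂ ω ∂P) - α₂)
          ((∫ ω, max (S₁ ω) ((P[S₂|m1]) ω - α₂) ∂P) - α₁))
    ∧
    (sInf {x : ℝ | ∃ M : Ω → ℝ, StronglyMeasurable[m1] M ∧ Integrable M P ∧
        (∫ ω, max (max (S₁ ω - M ω) 0 - α₁) (max ((P[S₂|m1]) ω - M ω) 0 - α₂) ∂P) ≤ 0 ∧
        x = ∫ ω, M ω ∂P}
      = ∫ ω, max (S₁ ω - α₁) ((P[S₂|m1]) ω - α₂) ∂P) :=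
  stmt_13_general P m1 hm1 S₁ S₂ hS₁meas hS₁ α₁ α₂ hα₁ hα₂
end

section
/- Assume P = Q, let l(x) = (−x)^+, let α_1,…,α_n ≥ 0, and suppose the adapted integrable process (S_k)_{k=1}^n is a.s. non-decreasing (S_1 ≤ S_2 ≤ … ≤ S_n a.s.). Then the infimum of E[M_0] over all P-supermartingales (M_k)_{k=0}^n satisfying E[ (S_k − M_k)^+ ] ≤ α_k for every k ∈ {1,…,n} equals max_{k∈{1,…,n}} { E[S_k] − α_k }. -/
/-! A supermartingale has `E[M_k] ≤ E[M_0]`, and `E[S_k] - E[M_k] ≤ E[(S_k - M_k)⁺] ≤ α_k`, so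
`c := max_k (E[S_k] - α_k)` is a lower bound. It is attained by the martingale `M_k = E[f | ℱ_k]`
for an integrable `f` with `E[f] = c` that is a.s. comparable with every `S_k`: as `S` is
non-decreasing, `f` can be taken to be `S_1` shifted by a constant, or a convex combination of two
consecutive `S_k ≤ S_{k+1}`. Comparability makes `E[(S_k - f)⁺]` either `0` or `E[S_k] - c`, both
at most `α_k`, and conditional Jensen carries this bound over to `M_k`. -/

open MeasureTheory Filter
open scoped MeasureTheory

namespace MeasureTheory

variable {Ω : Type*} {m0 : MeasurableSpace Ω} {μ : Measure Ω}

theorem Supermartingale.isSupermartingaleOn_s14 {𝓕 : Filtration ℕ m0} {M : ℕ → Ω → ℝ}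
    (hM : Supermartingale M 𝓕 μ) (a b : ℕ) : IsSupermartingaleOn 𝓕 μ M a b :=
  ⟨fun k _ _ => hM.stronglyMeasurable k, fun k _ _ => hM.integrable k,
    fun _ _ _ => hM.condExp_ae_le (Nat.le_succ _)⟩

theorem IsSupermartingaleOn.integral_le [IsFiniteMeasure μ] {𝓕 : Filtration ℕ m0}
    {M : ℕ → Ω → ℝ} {a b : ℕ} (hM : IsSupermartingaleOn 𝓕 μ M a b) {k : ℕ} (hak : a ≤ k)
    (hkb : k ≤ b) : ∫ ω, M k ω ∂μ ≤ ∫ ω, M a ω ∂μ := by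
  induction k, hak using Nat.le_induction with
  | base => exact le_rfl
  | succ k hak ih =>
    calc ∫ ω, M (k + 1) ω ∂μ = ∫ ω, (μ[M (k + 1)|𝓕 k]) ω ∂μ := (integral_condExp (𝓕.le k)).symm
      _ ≤ ∫ ω, M k ω ∂μ :=
        integral_mono_ae integrable_condExp (hM.2.1 k hak (by omega)) (hM.2.2 k hak (by omega))
      _ ≤ ∫ ω, M a ω ∂μ := ih (by omega)

theorem integral_sub_le_integral_posPart_sub {f g : Ω → ℝ} (hf : Integrable f μ)
    (hg : Integrable g μ) :
    ∫ ω, g ω ∂μ - ∫ ω, f ω ∂μ ≤ ∫ ω, max (g ω - f ω) 0 ∂μ := by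
  rw [← integral_sub hg hf]
  exact integral_mono (hg.sub hf) (hg.sub hf).pos_part fun ω => le_max_left _ _

theorem integral_posPart_sub_le_of_le_or_le {f g : Ω → ℝ} (hf : Integrable f μ)
    (hg : Integrable g μ) {α : ℝ} (hα : 0 ≤ α) (hfg : ∫ ω, g ω ∂μ - α ≤ ∫ ω, f ω ∂μ)
    (h : g ≤ᵐ[μ] f ∨ f ≤ᵐ[μ] g) : ∫ ω, max (g ω - f ω) 0 ∂μ ≤ α := by
  rcases h with hle | hle
  · have hzero : (fun ω => max (g ω - f ω) 0) =ᵐ[μ] fun _ => (0 : ℝ) := by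
      filter_upwards [hle] with ω hω
      simpa using hω
    rw [integral_congr_ae hzero, integral_zero]
    exact hα
  · have hsub : (fun ω => max (g ω - f ω) 0) =ᵐ[μ] fun ω => g ω - f ω := by
      filter_upwards [hle] with ω hω
      exact max_eq_left (sub_nonneg.mpr hω)
    rw [integral_congr_ae hsub, integral_sub hg hf]
    linarith

theorem integral_posPart_sub_condExp_le {m : MeasurableSpace Ω} (hm : m ≤ m0)
    [SigmaFinite (μ.trim hm)] {f g : Ω → ℝ} (hf : Integrable f μ)
    (hgm : StronglyMeasurable[m] g) (hg : Integrable g μ) :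
    ∫ ω, max (g ω - (μ[f|m]) ω) 0 ∂μ ≤ ∫ ω, max (g ω - f ω) 0 ∂μ := by
  have hsub : ∀ᵐ ω ∂μ, (μ[g - f|m]) ω = g ω - (μ[f|m]) ω := by
    filter_upwards [condExp_sub hg hf m] with ω hω
    rw [hω, Pi.sub_apply, condExp_of_stronglyMeasurable hm hgm hg]
  have hle : μ[g - f|m] ≤ᵐ[μ] μ[fun ω => max (g ω - f ω) 0|m] :=
    condExp_mono (hg.sub hf) (hg.sub hf).pos_part (ae_of_all _ fun ω => le_max_left _ _)
  have hnonneg : 0 ≤ᵐ[μ] μ[fun ω => max (g ω - f ω) 0|m] :=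
    condExp_nonneg (ae_of_all _ fun ω => le_max_right _ _)
  calc ∫ ω, max (g ω - (μ[f|m]) ω) 0 ∂μ
      ≤ ∫ ω, (μ[fun ω => max (g ω - f ω) 0|m]) ω ∂μ := by
        refine integral_mono_ae (hg.sub integrable_condExp).pos_part integrable_condExp ?_
        filter_upwards [hsub, hle, hnonneg] with ω h₁ h₂ h₃
        exact max_le (h₁ ▸ h₂) h₃
    _ = ∫ ω, max (g ω - f ω) 0 ∂μ := integral_condExp hm

theorem exists_integral_eq_of_ae_le_of_ae_le {f g : Ω → ℝ} (hf : Integrable f μ)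
    (hg : Integrable g μ) (hfg : f ≤ᵐ[μ] g) {x : ℝ} (hfx : ∫ ω, f ω ∂μ ≤ x)
    (hxg : x ≤ ∫ ω, g ω ∂μ) :
    ∃ h : Ω → ℝ, Integrable h μ ∧ f ≤ᵐ[μ] h ∧ h ≤ᵐ[μ] g ∧ ∫ ω, h ω ∂μ = x := by
  set t := (x - ∫ ω, f ω ∂μ) / (∫ ω, g ω ∂μ - ∫ ω, f ω ∂μ)
  have ht₀ : 0 ≤ t := div_nonneg (by linarith) (by linarith)
  have ht₁ : t ≤ 1 := div_le_one_of_le₀ (by linarith) (by linarith)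
  have hint : Integrable (fun ω => t * (g ω - f ω)) μ := (hg.sub hf).const_mul t
  refine ⟨fun ω => f ω + t * (g ω - f ω), hf.add hint, ?_, ?_, ?_⟩
  · filter_upwards [hfg] with ω hω
    nlinarith
  · filter_upwards [hfg] with ω hω
    nlinarith
  · rw [integral_add hf hint, integral_const_mul, integral_sub hg hf]
    rcases eq_or_ne (∫ ω, g ω ∂μ - ∫ ω, f ω ∂μ) 0 with h | h
    · rw [h]; linarith
    · rw [div_mul_cancel₀ _ h]; ring

theorem exists_integral_eq_comparable_of_monotone [IsProbabilityMeasure μ] {S : ℕ → Ω → ℝ}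
    (hS : ∀ k, Integrable (S k) μ) {m : ℕ} (hm : 1 ≤ m)
    (hmono : ∀ᵐ ω ∂μ, ∀ j k, 1 ≤ j → j ≤ k → k ≤ m → S j ω ≤ S k ω) {x : ℝ}
    (hx : x ≤ ∫ ω, S m ω ∂μ) :
    ∃ f : Ω → ℝ, Integrable f μ ∧ ∫ ω, f ω ∂μ = x ∧ f ≤ᵐ[μ] S m ∧
      ∀ k, 1 ≤ k → k ≤ m → S k ≤ᵐ[μ] f ∨ f ≤ᵐ[μ] S k := by
  induction m, hm using Nat.le_induction generalizing x with
  | base =>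
    have hint : Integrable (fun ω => S 1 ω + (x - ∫ ω, S 1 ω ∂μ)) μ :=
      (hS 1).add (integrable_const _)
    have hle : (fun ω => S 1 ω + (x - ∫ ω, S 1 ω ∂μ)) ≤ᵐ[μ] S 1 :=
      ae_of_all _ fun ω => by linarith
    refine ⟨_, hint, ?_, hle, fun k hk₁ hk₂ => Or.inr (le_antisymm hk₂ hk₁ ▸ hle)⟩
    rw [integral_add (hS 1) (integrable_const _), integral_const, probReal_univ, one_smul]
    ring
  | succ m hm ih =>
    have hle_m : ∀ k, 1 ≤ k → k ≤ m → S k ≤ᵐ[μ] S m := fun k hk₁ hk₂ =>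
      hmono.mono fun ω h => h k m hk₁ hk₂ m.le_succ
    have hle_succ : S m ≤ᵐ[μ] S (m + 1) := hmono.mono fun ω h => h m (m + 1) hm m.le_succ le_rfl
    rcases le_or_gt x (∫ ω, S m ω ∂μ) with hxm | hxm
    · obtain ⟨f, hf, hfx, hfS, hcomp⟩ :=
        ih (hmono.mono fun ω h j k hj hjk hk => h j k hj hjk (hk.trans m.le_succ)) hxm
      have hfS' : f ≤ᵐ[μ] S (m + 1) := hfS.trans hle_succ
      refine ⟨f, hf, hfx, hfS', fun k hk₁ hk₂ => ?_⟩
      rcases Nat.le_succ_iff.mp hk₂ with hk | rfl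
      · exact hcomp k hk₁ hk
      · exact Or.inr hfS'
    · obtain ⟨f, hf, hSf, hfS, hfx⟩ :=
        exists_integral_eq_of_ae_le_of_ae_le (hS m) (hS (m + 1)) hle_succ hxm.le hx
      refine ⟨f, hf, hfx, hfS, fun k hk₁ hk₂ => ?_⟩
      rcases Nat.le_succ_iff.mp hk₂ with hk | rfl
      · exact Or.inl ((hle_m k hk₁ hk).trans hSf)
      · exact Or.inr hfS

end MeasureTheory

theorem stmt_14_general
    {Ω : Type*} {m0 : MeasurableSpace Ω} (P : Measure Ω) [IsProbabilityMeasure P]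
    (𝓕 : Filtration ℕ m0) (n : ℕ) (hn : 1 ≤ n)
    (S : ℕ → Ω → ℝ) (hS : Adapted 𝓕 S) (hSint : ∀ k, Integrable (S k) P)
    (hSmono : ∀ᵐ ω ∂P, ∀ j k, 1 ≤ j → j ≤ k → k ≤ n → S j ω ≤ S k ω)
    (α : ℕ → ℝ) (hα : ∀ k, 1 ≤ k → k ≤ n → 0 ≤ α k) :
    sInf {x : ℝ | ∃ M : ℕ → Ω → ℝ, IsSupermartingaleOn 𝓕 P M 0 n ∧
        (∀ k, 1 ≤ k → k ≤ n → (∫ ω, max (S k ω - M k ω) 0 ∂P) ≤ α k) ∧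
        x = ∫ ω, M 0 ω ∂P}
      = (Finset.Icc 1 n).sup' (Finset.nonempty_Icc.mpr hn)
          (fun k => (∫ ω, S k ω ∂P) - α k) := by
  set c := (Finset.Icc 1 n).sup' (Finset.nonempty_Icc.mpr hn) (fun k => (∫ ω, S k ω ∂P) - α k)
  have hc : ∀ k, 1 ≤ k → k ≤ n → (∫ ω, S k ω ∂P) - α k ≤ c := fun k hk₁ hk₂ =>
    Finset.le_sup' (fun k => (∫ ω, S k ω ∂P) - α k) (Finset.mem_Icc.mpr ⟨hk₁, hk₂⟩)
  refine IsLeast.csInf_eq ⟨?_, ?_⟩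
  · have hcS : c ≤ ∫ ω, S n ω ∂P := Finset.sup'_le _ _ fun k hk => by
      obtain ⟨hk₁, hk₂⟩ := Finset.mem_Icc.mp hk
      have := integral_mono_ae (hSint k) (hSint n) (hSmono.mono fun ω h => h k n hk₁ hk₂ le_rfl)
      linarith [hα k hk₁ hk₂]
    obtain ⟨f, hf, hfc, -, hcomp⟩ :=
      exists_integral_eq_comparable_of_monotone hSint hn hSmono hcS
    refine ⟨fun k => P[f|𝓕 k], (martingale_condExp f 𝓕 P).supermartingale.isSupermartingaleOn_s14 0 n,
      fun k hk₁ hk₂ => ?_, by rw [integral_condExp (𝓕.le 0), hfc]⟩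
    calc ∫ ω, max (S k ω - (P[f|𝓕 k]) ω) 0 ∂P ≤ ∫ ω, max (S k ω - f ω) 0 ∂P :=
          integral_posPart_sub_condExp_le (𝓕.le k) hf (hS k).stronglyMeasurable (hSint k)
      _ ≤ α k := integral_posPart_sub_le_of_le_or_le hf (hSint k) (hα k hk₁ hk₂)
          (hfc ▸ hc k hk₁ hk₂) (hcomp k hk₁ hk₂)
  · rintro x ⟨M, hM, hMS, rfl⟩
    refine Finset.sup'_le _ _ fun k hk => ?_
    obtain ⟨hk₁, hk₂⟩ := Finset.mem_Icc.mp hk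
    linarith [integral_sub_le_integral_posPart_sub (hM.2.1 k k.zero_le hk₂) (hSint k),
      hMS k hk₁ hk₂, hM.integral_le k.zero_le hk₂]

/-- Proposition 5.1: with `P = Q`, loss `l(x) = (-x)⁺`, nonnegative tolerances and
a non-decreasing benchmark `(S_k)`, the minimal cost of a `P`-supermartingale
satisfying `E[(S_k - M_k)⁺] ≤ α_k` for all `k ∈ {1,…,n}` is
`max_k (E[S_k] - α_k)`. -/
theorem stmt_14
    {Ω : Type*} {m0 : MeasurableSpace Ω} (P : Measure Ω) [IsProbabilityMeasure P]
    (𝓕 : Filtration ℕ m0) (n : ℕ) (hn : 1 ≤ n)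
    (htriv : ∀ s : Set Ω, MeasurableSet[𝓕 0] s → P s = 0 ∨ P s = 1)
    (S : ℕ → Ω → ℝ) (hS : Adapted 𝓕 S) (hSint : ∀ k, Integrable (S k) P)
    (hSmono : ∀ᵐ ω ∂P, ∀ j k, 1 ≤ j → j ≤ k → k ≤ n → S j ω ≤ S k ω)
    (α : ℕ → ℝ) (hα : ∀ k, 1 ≤ k → k ≤ n → 0 ≤ α k) :
    sInf {x : ℝ | ∃ M : ℕ → Ω → ℝ, IsSupermartingaleOn 𝓕 P M 0 n ∧
        (∀ k, 1 ≤ k → k ≤ n → (∫ ω, max (S k ω - M k ω) 0 ∂P) ≤ α k) ∧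
        x = ∫ ω, M 0 ω ∂P}
      = (Finset.Icc 1 n).sup' (Finset.nonempty_Icc.mpr hn)
          (fun k => (∫ ω, S k ω ∂P) - α k) :=
  stmt_14_general P 𝓕 n hn S hS hSint hSmono α hα
end

section
/- Let X, Y be integrable random variables on a probability space and α, β ≥ 0. Then the infimum of E[M] over all integrable random variables M satisfying E[(X − M)^+] ≤ α and E[(Y − M)^+] ≤ β equals max{ E[X] − α, E[Y] − β, E[X ∨ Y] − α − β }. -/
open MeasureTheory Filter
open scoped MeasureTheory

/-- Lemma A.1, first part: for integrable `X`, `Y` and `α, β ≥ 0`,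
`inf { E[M] : E[(X-M)⁺] ≤ α, E[(Y-M)⁺] ≤ β }
  = max( E[X] - α, E[Y] - β, E[X ∨ Y] - α - β )`. -/
theorem stmt_15
    {Ω : Type*} {m0 : MeasurableSpace Ω} (P : Measure Ω) [IsProbabilityMeasure P]
    (X Y : Ω → ℝ) (hX : Integrable X P) (hY : Integrable Y P)
    (α β : ℝ) (hα : 0 ≤ α) (hβ : 0 ≤ β) :
    sInf {x : ℝ | ∃ M : Ω → ℝ, Integrable M P ∧
        (∫ ω, max (X ω - M ω) 0 ∂P) ≤ α ∧
        (∫ ω, max (Y ω - M ω) 0 ∂P) ≤ β ∧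
        x = ∫ ω, M ω ∂P}
      = max (max ((∫ ω, X ω ∂P) - α) ((∫ ω, Y ω ∂P) - β))
          ((∫ ω, max (X ω) (Y ω) ∂P) - α - β) := by
  classical
  set S : Set ℝ := {x : ℝ | ∃ M : Ω → ℝ, Integrable M P ∧
        (∫ ω, max (X ω - M ω) 0 ∂P) ≤ α ∧
        (∫ ω, max (Y ω - M ω) 0 ∂P) ≤ β ∧
        x = ∫ ω, M ω ∂P} with hS
  set c : ℝ := max (max ((∫ ω, X ω ∂P) - α) ((∫ ω, Y ω ∂P) - β))
          ((∫ ω, max (X ω) (Y ω) ∂P) - α - β) with hc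
  have hsup : Integrable (fun ω => max (X ω) (Y ω)) P := hX.sup hY
  have hYX : Integrable (fun ω => max (Y ω - X ω) 0) P := (hY.sub hX).pos_part
  have hXY : Integrable (fun ω => max (X ω - Y ω) 0) P := (hX.sub hY).pos_part
  set p : ℝ := ∫ ω, max (Y ω - X ω) 0 ∂P with hpdef
  set q : ℝ := ∫ ω, max (X ω - Y ω) 0 ∂P with hqdef
  have hp0 : 0 ≤ p := integral_nonneg fun ω => le_max_right _ _
  have hq0 : 0 ≤ q := integral_nonneg fun ω => le_max_right _ _
  -- ∫ max X Y = ∫ X + p = ∫ Y + q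
  have hIX : (∫ ω, max (X ω) (Y ω) ∂P) = (∫ ω, X ω ∂P) + p := by
    have h : (fun ω => max (X ω) (Y ω)) = fun ω => X ω + max (Y ω - X ω) 0 := by
      funext ω
      rcases le_total (X ω) (Y ω) with h | h
      · rw [max_eq_right h, max_eq_left (by linarith)]; ring
      · rw [max_eq_left h, max_eq_right (by linarith)]; ring
    rw [h, integral_add hX hYX]
  have hIY : (∫ ω, max (X ω) (Y ω) ∂P) = (∫ ω, Y ω ∂P) + q := by
    have h : (fun ω => max (X ω) (Y ω)) = fun ω => Y ω + max (X ω - Y ω) 0 := by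
      funext ω
      rcases le_total (X ω) (Y ω) with h | h
      · rw [max_eq_right h, max_eq_right (by linarith)]; ring
      · rw [max_eq_left h, max_eq_left (by linarith)]; ring
    rw [h, integral_add hY hXY]
  -- Lower bound: c is a lower bound of S
  have hlb : ∀ x ∈ S, c ≤ x := by
    rintro x ⟨M, hM, h1, h2, rfl⟩
    have e1 : (∫ ω, X ω ∂P) - (∫ ω, M ω ∂P) ≤ α := by
      have h : (∫ ω, (X ω - M ω) ∂P) ≤ ∫ ω, max (X ω - M ω) 0 ∂P :=
        integral_mono (hX.sub hM) (hX.sub hM).pos_part fun ω => le_max_left _ _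
      rw [integral_sub hX hM] at h
      linarith
    have e2 : (∫ ω, Y ω ∂P) - (∫ ω, M ω ∂P) ≤ β := by
      have h : (∫ ω, (Y ω - M ω) ∂P) ≤ ∫ ω, max (Y ω - M ω) 0 ∂P :=
        integral_mono (hY.sub hM) (hY.sub hM).pos_part fun ω => le_max_left _ _
      rw [integral_sub hY hM] at h
      linarith
    have e3 : (∫ ω, max (X ω) (Y ω) ∂P) - (∫ ω, M ω ∂P) ≤ α + β := by
      have hpt : ∀ ω, max (X ω) (Y ω) - M ω ≤
          max (X ω - M ω) 0 + max (Y ω - M ω) 0 := by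
        intro ω
        have a1 : X ω - M ω ≤ max (X ω - M ω) 0 := le_max_left _ _
        have a2 : Y ω - M ω ≤ max (Y ω - M ω) 0 := le_max_left _ _
        have a3 : (0:ℝ) ≤ max (X ω - M ω) 0 := le_max_right _ _
        have a4 : (0:ℝ) ≤ max (Y ω - M ω) 0 := le_max_right _ _
        rcases le_total (X ω) (Y ω) with h | h
        · rw [max_eq_right h]; linarith
        · rw [max_eq_left h]; linarith
      have h : (∫ ω, (max (X ω) (Y ω) - M ω) ∂P) ≤
          ∫ ω, (max (X ω - M ω) 0 + max (Y ω - M ω) 0) ∂P :=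
        integral_mono (hsup.sub hM)
          ((hX.sub hM).pos_part.add (hY.sub hM).pos_part) hpt
      have hs : (∫ ω, (max (X ω) (Y ω) - M ω) ∂P)
          = (∫ ω, max (X ω) (Y ω) ∂P) - ∫ ω, M ω ∂P := integral_sub hsup hM
      have ha : (∫ ω, (max (X ω - M ω) 0 + max (Y ω - M ω) 0) ∂P)
          = (∫ ω, max (X ω - M ω) 0 ∂P) + ∫ ω, max (Y ω - M ω) 0 ∂P :=
        integral_add (hX.sub hM).pos_part (hY.sub hM).pos_part
      rw [hs, ha] at h
      linarith
    exact max_le (max_le (by linarith) (by linarith)) (by linarith)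
  -- The optimal M
  set L : ℝ := if p = 0 then 1 else min β p / p with hLdef
  set U : ℝ := if q = 0 then 1 else min α q / q with hUdef
  set t : ℝ := min (max (α - q) 0) (max (β - p) 0) with htdef
  have hL0 : 0 ≤ L := by
    rw [hLdef]; split
    · norm_num
    · exact div_nonneg (le_min hβ hp0) hp0
  have hL1 : L ≤ 1 := by
    rw [hLdef]; split
    · norm_num
    · rename_i h
      rw [div_le_one (lt_of_le_of_ne hp0 (Ne.symm h))]
      exact min_le_right _ _
  have hLp : L * p = min β p := by
    rw [hLdef]; split
    · rename_i h; rw [h, min_eq_right hβ]; ring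
    · rename_i h; field_simp
  have hU0 : 0 ≤ U := by
    rw [hUdef]; split
    · norm_num
    · exact div_nonneg (le_min hα hq0) hq0
  have hU1 : U ≤ 1 := by
    rw [hUdef]; split
    · norm_num
    · rename_i h
      rw [div_le_one (lt_of_le_of_ne hq0 (Ne.symm h))]
      exact min_le_right _ _
  have hUq : U * q = min α q := by
    rw [hUdef]; split
    · rename_i h; rw [h, min_eq_right hα]; ring
    · rename_i h; field_simp
  have ht0 : 0 ≤ t := le_min (le_max_right _ _) (le_max_right _ _)
  set M : Ω → ℝ := fun ω =>
    max (X ω) (Y ω) - L * max (Y ω - X ω) 0 - U * max (X ω - Y ω) 0 - t with hMdef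
  have hM : Integrable M P :=
    (((hsup.sub (hYX.const_mul L)).sub (hXY.const_mul U)).sub (integrable_const t))
  have hMint : (∫ ω, M ω ∂P) =
      (∫ ω, max (X ω) (Y ω) ∂P) - L * p - U * q - t := by
    have i1 : Integrable (fun ω => max (X ω) (Y ω) - L * max (Y ω - X ω) 0) P :=
      hsup.sub (hYX.const_mul L)
    have i2 : Integrable
        (fun ω => max (X ω) (Y ω) - L * max (Y ω - X ω) 0 - U * max (X ω - Y ω) 0) P :=
      i1.sub (hXY.const_mul U)
    have e1 : (∫ ω, M ω ∂P) =
        (∫ ω, (max (X ω) (Y ω) - L * max (Y ω - X ω) 0 - U * max (X ω - Y ω) 0) ∂P)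
          - ∫ _ω, t ∂P := integral_sub i2 (integrable_const t)
    have e2 : (∫ ω, (max (X ω) (Y ω) - L * max (Y ω - X ω) 0 - U * max (X ω - Y ω) 0) ∂P)
        = (∫ ω, (max (X ω) (Y ω) - L * max (Y ω - X ω) 0) ∂P)
          - ∫ ω, U * max (X ω - Y ω) 0 ∂P := integral_sub i1 (hXY.const_mul U)
    have e3 : (∫ ω, (max (X ω) (Y ω) - L * max (Y ω - X ω) 0) ∂P)
        = (∫ ω, max (X ω) (Y ω) ∂P) - ∫ ω, L * max (Y ω - X ω) 0 ∂P :=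
      integral_sub hsup (hYX.const_mul L)
    have e4 : (∫ ω, L * max (Y ω - X ω) 0 ∂P) = L * p := integral_const_mul L _
    have e5 : (∫ ω, U * max (X ω - Y ω) 0 ∂P) = U * q := integral_const_mul U _
    have e6 : (∫ _ω : Ω, t ∂P) = t := by simp
    rw [e1, e2, e3, e4, e5, e6]
  -- feasibility
  have key1 : min α q + t ≤ α := by
    have h1 : t ≤ max (α - q) 0 := min_le_left _ _
    rcases le_total α q with h | h
    · have h2 : max (α - q) 0 = 0 := max_eq_right (by linarith)
      have h3 : min α q = α := min_eq_left h
      linarith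
    · have h2 : max (α - q) 0 = α - q := max_eq_left (by linarith)
      have h3 : min α q = q := min_eq_right h
      linarith
  have key2 : min β p + t ≤ β := by
    have h1 : t ≤ max (β - p) 0 := min_le_right _ _
    rcases le_total β p with h | h
    · have h2 : max (β - p) 0 = 0 := max_eq_right (by linarith)
      have h3 : min β p = β := min_eq_left h
      linarith
    · have h2 : max (β - p) 0 = β - p := max_eq_left (by linarith)
      have h3 : min β p = p := min_eq_right h
      linarith
  have hfeas1 : (∫ ω, max (X ω - M ω) 0 ∂P) ≤ α := by
    have hpt : ∀ ω, max (X ω - M ω) 0 ≤ U * max (X ω - Y ω) 0 + t := by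
      intro ω
      have hmx : max (X ω) (Y ω) = X ω + max (Y ω - X ω) 0 := by
        rcases le_total (X ω) (Y ω) with h | h
        · rw [max_eq_right h, max_eq_left (by linarith)]; ring
        · rw [max_eq_left h, max_eq_right (by linarith)]; ring
      have hXM : X ω - M ω = (L - 1) * max (Y ω - X ω) 0 + U * max (X ω - Y ω) 0 + t := by
        rw [hMdef]; simp only; rw [hmx]; ring
      have a1 : (0:ℝ) ≤ max (Y ω - X ω) 0 := le_max_right _ _
      have a2 : (0:ℝ) ≤ max (X ω - Y ω) 0 := le_max_right _ _
      have a3 : (L - 1) * max (Y ω - X ω) 0 ≤ 0 :=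
        mul_nonpos_of_nonpos_of_nonneg (by linarith) a1
      have a4 : (0:ℝ) ≤ U * max (X ω - Y ω) 0 := mul_nonneg hU0 a2
      apply max_le
      · rw [hXM]; linarith
      · linarith
    have h : (∫ ω, max (X ω - M ω) 0 ∂P) ≤
        ∫ ω, (U * max (X ω - Y ω) 0 + t) ∂P :=
      integral_mono (hX.sub hM).pos_part ((hXY.const_mul U).add (integrable_const t)) hpt
    have ha : (∫ ω, (U * max (X ω - Y ω) 0 + t) ∂P)
        = (∫ ω, U * max (X ω - Y ω) 0 ∂P) + ∫ _ω, t ∂P :=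
      integral_add (hXY.const_mul U) (integrable_const t)
    have hb : (∫ ω, U * max (X ω - Y ω) 0 ∂P) = U * q := integral_const_mul U _
    have hc' : (∫ _ω : Ω, t ∂P) = t := by simp
    rw [ha, hb, hc'] at h
    calc (∫ ω, max (X ω - M ω) 0 ∂P) ≤ U * q + t := h
      _ = min α q + t := by rw [hUq]
      _ ≤ α := key1
  have hfeas2 : (∫ ω, max (Y ω - M ω) 0 ∂P) ≤ β := by
    have hpt : ∀ ω, max (Y ω - M ω) 0 ≤ L * max (Y ω - X ω) 0 + t := by
      intro ω
      have hmx : max (X ω) (Y ω) = Y ω + max (X ω - Y ω) 0 := by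
        rcases le_total (X ω) (Y ω) with h | h
        · rw [max_eq_right h, max_eq_right (by linarith)]; ring
        · rw [max_eq_left h, max_eq_left (by linarith)]; ring
      have hYM : Y ω - M ω = (U - 1) * max (X ω - Y ω) 0 + L * max (Y ω - X ω) 0 + t := by
        rw [hMdef]; simp only; rw [hmx]; ring
      have a1 : (0:ℝ) ≤ max (Y ω - X ω) 0 := le_max_right _ _
      have a2 : (0:ℝ) ≤ max (X ω - Y ω) 0 := le_max_right _ _
      have a3 : (U - 1) * max (X ω - Y ω) 0 ≤ 0 :=
        mul_nonpos_of_nonpos_of_nonneg (by linarith) a2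
      have a4 : (0:ℝ) ≤ L * max (Y ω - X ω) 0 := mul_nonneg hL0 a1
      apply max_le
      · rw [hYM]; linarith
      · linarith
    have h : (∫ ω, max (Y ω - M ω) 0 ∂P) ≤
        ∫ ω, (L * max (Y ω - X ω) 0 + t) ∂P :=
      integral_mono (hY.sub hM).pos_part ((hYX.const_mul L).add (integrable_const t)) hpt
    have ha : (∫ ω, (L * max (Y ω - X ω) 0 + t) ∂P)
        = (∫ ω, L * max (Y ω - X ω) 0 ∂P) + ∫ _ω, t ∂P :=
      integral_add (hYX.const_mul L) (integrable_const t)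
    have hb : (∫ ω, L * max (Y ω - X ω) 0 ∂P) = L * p := integral_const_mul L _
    have hc' : (∫ _ω : Ω, t ∂P) = t := by simp
    rw [ha, hb, hc'] at h
    calc (∫ ω, max (Y ω - M ω) 0 ∂P) ≤ L * p + t := h
      _ = min β p + t := by rw [hLp]
      _ ≤ β := key2
  have hmem : (∫ ω, M ω ∂P) ∈ S := ⟨M, hM, hfeas1, hfeas2, rfl⟩
  -- ∫ M ≤ c
  have hMle : (∫ ω, M ω ∂P) ≤ c := by
    rw [hMint, hLp, hUq]
    set I : ℝ := ∫ ω, max (X ω) (Y ω) ∂P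
    rcases le_total p β with hpβ | hβp <;> rcases le_total q α with hqα | hαq
    · have e1 : max (α - q) 0 = α - q := max_eq_left (by linarith)
      have e2 : max (β - p) 0 = β - p := max_eq_left (by linarith)
      have e3 : min β p = p := min_eq_right hpβ
      have e4 : min α q = q := min_eq_right hqα
      rcases le_total (α - q) (β - p) with h | h
      · have et : t = α - q := by rw [htdef, e1, e2, min_eq_left h]
        have : I - min β p - min α q - t ≤ (∫ ω, X ω ∂P) - α := by
          rw [et, e3, e4]; linarith [hIX]
        exact this.trans ((le_max_left _ _).trans (le_max_left _ _))
      · have et : t = β - p := by rw [htdef, e1, e2, min_eq_right h]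
        have : I - min β p - min α q - t ≤ (∫ ω, Y ω ∂P) - β := by
          rw [et, e3, e4]; linarith [hIY]
        exact this.trans ((le_max_right _ _).trans (le_max_left _ _))
    · have e3 : min β p = p := min_eq_right hpβ
      have e4 : min α q = α := min_eq_left hαq
      have : I - min β p - min α q - t ≤ (∫ ω, X ω ∂P) - α := by
        rw [e3, e4]; linarith [hIX, ht0]
      exact this.trans ((le_max_left _ _).trans (le_max_left _ _))
    · have e3 : min β p = β := min_eq_left hβp
      have e4 : min α q = q := min_eq_right hqα
      have : I - min β p - min α q - t ≤ (∫ ω, Y ω ∂P) - β := by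
        rw [e3, e4]; linarith [hIY, ht0]
      exact this.trans ((le_max_right _ _).trans (le_max_left _ _))
    · have e3 : min β p = β := min_eq_left hβp
      have e4 : min α q = α := min_eq_left hαq
      have : I - min β p - min α q - t ≤ I - α - β := by
        rw [e3, e4]; linarith [ht0]
      exact this.trans (le_max_right _ _)
  have hMeq : (∫ ω, M ω ∂P) = c := le_antisymm hMle (hlb _ hmem)
  apply le_antisymm
  · exact (csInf_le ⟨c, fun x hx => hlb x hx⟩ hmem).trans (le_of_eq hMeq)
  · exact le_csInf ⟨_, hmem⟩ hlb
end

section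
/- Let X, Y be integrable random variables on a probability space and α, β ≥ 0. Then the infimum of E[M] over all integrable random variables M satisfying E[ max( (X − M)^+ − α, (Y − M)^+ − β ) ] ≤ 0 equals E[ (X − α) ∨ (Y − β) ]. -/
open MeasureTheory Filter
open scoped MeasureTheory

/-- Lemma A.1, second part: for integrable `X`, `Y` and `α, β ≥ 0`,
`inf { E[M] : E[max((X-M)⁺ - α, (Y-M)⁺ - β)] ≤ 0 } = E[(X-α) ∨ (Y-β)]`. -/
theorem stmt_16
    {Ω : Type*} {m0 : MeasurableSpace Ω} (P : Measure Ω) [IsProbabilityMeasure P]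
    (X Y : Ω → ℝ) (hX : Integrable X P) (hY : Integrable Y P)
    (α β : ℝ) (hα : 0 ≤ α) (hβ : 0 ≤ β) :
    sInf {x : ℝ | ∃ M : Ω → ℝ, Integrable M P ∧
        (∫ ω, max (max (X ω - M ω) 0 - α) (max (Y ω - M ω) 0 - β) ∂P) ≤ 0 ∧
        x = ∫ ω, M ω ∂P}
      = ∫ ω, max (X ω - α) (Y ω - β) ∂P := by
  set M0 : Ω → ℝ := fun ω => max (X ω - α) (Y ω - β) with hM0def
  have hM0int : Integrable M0 P :=
    (hX.sub (integrable_const α)).sup (hY.sub (integrable_const β))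
  -- membership of E[M0]
  have hmem : (∫ ω, M0 ω ∂P) ∈ {x : ℝ | ∃ M : Ω → ℝ, Integrable M P ∧
        (∫ ω, max (max (X ω - M ω) 0 - α) (max (Y ω - M ω) 0 - β) ∂P) ≤ 0 ∧
        x = ∫ ω, M ω ∂P} := by
    refine ⟨M0, hM0int, ?_, rfl⟩
    apply integral_nonpos
    intro ω
    have h1 : X ω - M0 ω ≤ α := by
      have := le_max_left (X ω - α) (Y ω - β); simp only [hM0def]; linarith
    have h2 : Y ω - M0 ω ≤ β := by
      have := le_max_right (X ω - α) (Y ω - β); simp only [hM0def]; linarith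
    have := max_le h1 hα
    have := max_le h2 hβ
    simp only [Pi.zero_apply]
    apply max_le <;> linarith
  -- lower bound
  have hlb : ∀ x ∈ {x : ℝ | ∃ M : Ω → ℝ, Integrable M P ∧
        (∫ ω, max (max (X ω - M ω) 0 - α) (max (Y ω - M ω) 0 - β) ∂P) ≤ 0 ∧
        x = ∫ ω, M ω ∂P}, (∫ ω, M0 ω ∂P) ≤ x := by
    rintro x ⟨M, hM, hfeas, rfl⟩
    have hg : Integrable (fun ω => max (max (X ω - M ω) 0 - α) (max (Y ω - M ω) 0 - β)) P :=
      (((hX.sub hM).pos_part).sub (integrable_const α)).sup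
        (((hY.sub hM).pos_part).sub (integrable_const β))
    have hpt : ∀ ω, M0 ω - M ω ≤ max (max (X ω - M ω) 0 - α) (max (Y ω - M ω) 0 - β) := by
      intro ω
      have h1 : X ω - α - M ω ≤ max (X ω - M ω) 0 - α := by
        have := le_max_left (X ω - M ω) 0; linarith
      have h2 : Y ω - β - M ω ≤ max (Y ω - M ω) 0 - β := by
        have := le_max_right (X ω - M ω) 0
        have := le_max_left (Y ω - M ω) 0; linarith
      have : M0 ω - M ω = max (X ω - α - M ω) (Y ω - β - M ω) := by
        simp only [hM0def]
        rw [max_sub_sub_right]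
      rw [this]
      exact max_le_max h1 h2
    have hint : (∫ ω, (M0 ω - M ω) ∂P) ≤
        ∫ ω, max (max (X ω - M ω) 0 - α) (max (Y ω - M ω) 0 - β) ∂P :=
      integral_mono (hM0int.sub hM) hg hpt
    rw [integral_sub hM0int hM] at hint
    linarith
  exact le_antisymm (csInf_le ⟨_, hlb⟩ hmem) (le_csInf ⟨_, hmem⟩ hlb)
end

section
/- Let Z_1,…,Z_n be integrable random variables on a probability space with Z_1 ≤ Z_2 ≤ … ≤ Z_n a.s., and let α_1,…,α_n ≥ 0. Then the infimum of E[M] over all integrable random variables M satisfying E[ (Z_k − M)^+ ] ≤ α_k for every k ∈ {1,…,n} equals max_{k∈{1,…,n}} { E[Z_k] − α_k }. -/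
/-!
Any feasible `M` satisfies `E[Z_k] - α_k ≤ E[Z_k] - E[(Z_k - M)⁺] ≤ E[M]`. Conversely, for
`m := max_k (E[Z_k] - α_k) ≤ E[Z_n]` there is an `M` with `E[M] = m` that is a.s. comparable with
every `Z_k`: the shift `Z_1 - (E[Z_1] - m)` if `m ≤ E[Z_1]`, and otherwise a convex combination of
consecutive `Z_i ≤ Z_{i+1}` with `E[Z_i] ≤ m ≤ E[Z_{i+1}]`. For such `M`,
`E[(Z_k - M)⁺] = (E[Z_k] - m)⁺ ≤ α_k`.
-/

open MeasureTheory Filter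
open scoped MeasureTheory

section

variable {Ω : Type*} {m0 : MeasurableSpace Ω}

section AnyMeasure

variable {μ : Measure Ω} {X Y M : Ω → ℝ}

theorem integral_le_integral_add_integral_posPart_sub
    (hX : Integrable X μ) (hM : Integrable M μ) :
    ∫ ω, X ω ∂μ ≤ ∫ ω, M ω ∂μ + ∫ ω, max (X ω - M ω) 0 ∂μ := by
  have h : ∫ ω, X ω - M ω ∂μ ≤ ∫ ω, max (X ω - M ω) 0 ∂μ :=
    integral_mono (hX.sub hM) (hX.sub hM).pos_part fun ω => le_max_left _ _
  rw [integral_sub hX hM] at h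
  linarith

theorem integral_posPart_sub_of_comparable
    (hX : Integrable X μ) (hM : Integrable M μ) (hXM : X ≤ᵐ[μ] M ∨ M ≤ᵐ[μ] X) :
    ∫ ω, max (X ω - M ω) 0 ∂μ = max (∫ ω, X ω ∂μ - ∫ ω, M ω ∂μ) 0 := by
  rcases hXM with hle | hge
  · have hzero : (fun ω => max (X ω - M ω) 0) =ᵐ[μ] 0 :=
      hle.mono fun ω h => max_eq_right (sub_nonpos.mpr h)
    rw [integral_eq_zero_of_ae hzero, max_eq_right (sub_nonpos.mpr (integral_mono_ae hX hM hle))]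
  · have hsub : (fun ω => max (X ω - M ω) 0) =ᵐ[μ] fun ω => X ω - M ω :=
      hge.mono fun ω h => max_eq_left (sub_nonneg.mpr h)
    rw [integral_congr_ae hsub, integral_sub hX hM,
      max_eq_left (sub_nonneg.mpr (integral_mono_ae hM hX hge))]

theorem exists_integral_eq_of_ae_le (hX : Integrable X μ) (hY : Integrable Y μ)
    (hXY : X ≤ᵐ[μ] Y) {m : ℝ} (hXm : ∫ ω, X ω ∂μ ≤ m) (hmY : m ≤ ∫ ω, Y ω ∂μ) :
    ∃ M : Ω → ℝ, Integrable M μ ∧ ∫ ω, M ω ∂μ = m ∧ X ≤ᵐ[μ] M ∧ M ≤ᵐ[μ] Y := by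
  rcases hmY.eq_or_lt with rfl | hmY
  · exact ⟨Y, hY, rfl, hXY, EventuallyLE.rfl⟩
  have hgap : 0 < ∫ ω, Y ω ∂μ - ∫ ω, X ω ∂μ := by linarith
  set θ := (m - ∫ ω, X ω ∂μ) / (∫ ω, Y ω ∂μ - ∫ ω, X ω ∂μ)
  have hθ0 : 0 ≤ θ := div_nonneg (by linarith) hgap.le
  have hθ1 : θ ≤ 1 := (div_le_one hgap).mpr (by linarith)
  have hθYX : Integrable (fun ω => θ * (Y ω - X ω)) μ := (hY.sub hX).const_mul θ
  refine ⟨fun ω => X ω + θ * (Y ω - X ω), hX.add hθYX, ?_, ?_, ?_⟩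
  · rw [integral_add hX hθYX, integral_const_mul, integral_sub hY hX, div_mul_cancel₀ _ hgap.ne']
    ring
  · filter_upwards [hXY] with ω h
    nlinarith
  · filter_upwards [hXY] with ω h
    nlinarith

end AnyMeasure

section Probability

variable {P : Measure Ω} [IsProbabilityMeasure P]

theorem exists_integral_eq_of_le_integral {X : Ω → ℝ} (hX : Integrable X P) {m : ℝ}
    (hm : m ≤ ∫ ω, X ω ∂P) :
    ∃ M : Ω → ℝ, Integrable M P ∧ ∫ ω, M ω ∂P = m ∧ M ≤ᵐ[P] X := by
  refine ⟨fun ω => X ω - (∫ ω, X ω ∂P - m), hX.sub (integrable_const _), ?_, ?_⟩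
  · simp [integral_sub hX (integrable_const _)]
  · exact ae_of_all _ fun ω => by linarith

theorem exists_integral_eq_forall_comparable {Z : ℕ → Ω → ℝ} {n : ℕ} (hn : 1 ≤ n)
    (hZint : ∀ k, 1 ≤ k → k ≤ n → Integrable (Z k) P)
    (hZmono : ∀ j k, 1 ≤ j → j ≤ k → k ≤ n → Z j ≤ᵐ[P] Z k) {m : ℝ}
    (hm : m ≤ ∫ ω, Z n ω ∂P) :
    ∃ M : Ω → ℝ, Integrable M P ∧ ∫ ω, M ω ∂P = m ∧ M ≤ᵐ[P] Z n ∧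
      ∀ k, 1 ≤ k → k ≤ n → Z k ≤ᵐ[P] M ∨ M ≤ᵐ[P] Z k := by
  induction n, hn using Nat.le_induction generalizing m with
  | base =>
    obtain ⟨M, hM, hMm, hMZ⟩ := exists_integral_eq_of_le_integral (hZint 1 le_rfl le_rfl) hm
    refine ⟨M, hM, hMm, hMZ, fun k hk1 hk => ?_⟩
    obtain rfl : k = 1 := le_antisymm hk hk1
    exact Or.inr hMZ
  | succ n hn ih =>
    have hZint' : ∀ k, 1 ≤ k → k ≤ n → Integrable (Z k) P :=
      fun k hk1 hk => hZint k hk1 (by omega)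
    have hZmono' : ∀ j k, 1 ≤ j → j ≤ k → k ≤ n → Z j ≤ᵐ[P] Z k :=
      fun j k hj hjk hk => hZmono j k hj hjk (by omega)
    have hZn : Z n ≤ᵐ[P] Z (n + 1) := hZmono n (n + 1) hn (by omega) le_rfl
    rcases le_or_gt m (∫ ω, Z n ω ∂P) with hmn | hnm
    · obtain ⟨M, hM, hMm, hMZ, hcomp⟩ := ih hZint' hZmono' hmn
      refine ⟨M, hM, hMm, hMZ.trans hZn, fun k hk1 hk => ?_⟩
      rcases hk.lt_or_eq with hk | rfl
      · exact hcomp k hk1 (by omega)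
      · exact Or.inr (hMZ.trans hZn)
    · obtain ⟨M, hM, hMm, hZM, hMZ⟩ := exists_integral_eq_of_ae_le (hZint n hn (by omega))
        (hZint (n + 1) (by omega) le_rfl) hZn hnm.le hm
      refine ⟨M, hM, hMm, hMZ, fun k hk1 hk => ?_⟩
      rcases hk.lt_or_eq with hk | rfl
      · exact Or.inl ((hZmono' k n hk1 (by omega) le_rfl).trans hZM)
      · exact Or.inr hMZ

end Probability

end

/-- Lemma A.2: for integrable `Z₁ ≤ Z₂ ≤ … ≤ Z_n` a.s. and `α_k ≥ 0`,
`inf { E[M] : E[(Z_k - M)⁺] ≤ α_k, k = 1,…,n } = max_k (E[Z_k] - α_k)`. -/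
theorem stmt_17
    {Ω : Type*} {m0 : MeasurableSpace Ω} (P : Measure Ω) [IsProbabilityMeasure P]
    (n : ℕ) (hn : 1 ≤ n)
    (Z : ℕ → Ω → ℝ) (hZint : ∀ k, 1 ≤ k → k ≤ n → Integrable (Z k) P)
    (hZmono : ∀ᵐ ω ∂P, ∀ j k, 1 ≤ j → j ≤ k → k ≤ n → Z j ω ≤ Z k ω)
    (α : ℕ → ℝ) (hα : ∀ k, 1 ≤ k → k ≤ n → 0 ≤ α k) :
    sInf {x : ℝ | ∃ M : Ω → ℝ, Integrable M P ∧
        (∀ k, 1 ≤ k → k ≤ n → (∫ ω, max (Z k ω - M ω) 0 ∂P) ≤ α k) ∧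
        x = ∫ ω, M ω ∂P}
      = (Finset.Icc 1 n).sup' (Finset.nonempty_Icc.mpr hn)
          (fun k => (∫ ω, Z k ω ∂P) - α k) := by
  set m := (Finset.Icc 1 n).sup' (Finset.nonempty_Icc.mpr hn) (fun k => (∫ ω, Z k ω ∂P) - α k)
  have hZmono' : ∀ j k, 1 ≤ j → j ≤ k → k ≤ n → Z j ≤ᵐ[P] Z k :=
    fun j k hj hjk hk => hZmono.mono fun ω h => h j k hj hjk hk
  have hle_m : ∀ k, 1 ≤ k → k ≤ n → (∫ ω, Z k ω ∂P) - α k ≤ m :=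
    fun k hk1 hk => Finset.le_sup' (fun k => (∫ ω, Z k ω ∂P) - α k) (Finset.mem_Icc.mpr ⟨hk1, hk⟩)
  have hm_le : m ≤ ∫ ω, Z n ω ∂P := Finset.sup'_le _ _ fun k hk => by
    obtain ⟨hk1, hk⟩ := Finset.mem_Icc.mp hk
    linarith [hα k hk1 hk,
      integral_mono_ae (hZint k hk1 hk) (hZint n hn le_rfl) (hZmono' k n hk1 hk le_rfl)]
  refine IsLeast.csInf_eq ⟨?_, ?_⟩
  · obtain ⟨M, hM, hMm, -, hcomp⟩ := exists_integral_eq_forall_comparable hn hZint hZmono' hm_le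
    refine ⟨M, hM, fun k hk1 hk => ?_, hMm.symm⟩
    rw [integral_posPart_sub_of_comparable (hZint k hk1 hk) hM (hcomp k hk1 hk), hMm]
    exact max_le (by linarith [hle_m k hk1 hk]) (hα k hk1 hk)
  · rintro x ⟨M, hM, hfeas, rfl⟩
    refine Finset.sup'_le _ _ fun k hk => ?_
    obtain ⟨hk1, hk⟩ := Finset.mem_Icc.mp hk
    linarith [integral_le_integral_add_integral_posPart_sub (hZint k hk1 hk) hM, hfeas k hk1 hk]
end
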